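/- arXiv:1805.03579 — 4 statements merged into one kernel-verified Lean document; each statement's English description precedes it below -/
import Mathlib

section
/- Let {a_{i,j}}_{1≤i,j≤n} be nonnegative reals and Π a uniformly random permutation of {1,…,n}. Let Z = ∑_{i=1}^n a_{i,Π(i)}. Then Var(Z) ≤ (2/n) ∑_{i,j=1}^n a_{i,j}^2. -/
/-- Expectation with respect to the uniform distribution on permutations of `{1,…,n}`. -/
noncomputable def Ex (n : ℕ) (f : Equiv.Perm (Fin n) → ℝ) : ℝ :=
  (∑ π : Equiv.Perm (Fin n), f π) / (Nat.factorial n)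

/-!
Write `Z π = ∑ i, a i (π i)`, `S = ∑ i j, a i j`, `R = ∑ i, (∑ j, a i j)²`,
`C = ∑ j, (∑ i, a i j)²` and `Q = ∑ i j, (a i j)²`. Relabelling by a permutation shows that
`π i` is uniform and, for `i ≠ k`, that `(π i, π k)` is uniform on the off-diagonal pairs. Hence
`n E[Z] = S` and `n (n - 1) E[Z²] = S² - R - C + n Q`, so
`n² (n - 1) Var Z = S² - n R - n C + n² Q ≤ n² Q` by Cauchy–Schwarz `S² ≤ n R`.
Thus `Var Z ≤ Q / (n - 1) ≤ 2 Q / n`.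
-/

open Finset Equiv
open scoped Nat

theorem Equiv.Perm.sum_offDiag_comp {α M : Type*} [Fintype α] [AddCommMonoid M] (π : Perm α)
    (g : α → α → M) :
    ∑ p ∈ univ.offDiag, g (π p.1) (π p.2) = ∑ p ∈ univ.offDiag, g p.1 p.2 :=
  sum_nbij' (Prod.map π π) (Prod.map π.symm π.symm) (by simp) (by simp) (by simp) (by simp)
    (fun _ _ => rfl)

theorem Finset.sum_offDiag_eq_sum_sub_sum_diag {α R : Type*} [Fintype α] [DecidableEq α]
    [AddCommGroup R] (g : α → α → R) :
    ∑ p ∈ univ.offDiag, g p.1 p.2 = ∑ i, ∑ k, g i k - ∑ i, g i i := by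
  rw [eq_sub_iff_add_eq, ← sum_diag (s := univ) (f := fun p => g p.1 p.2), add_comm,
    ← sum_union (disjoint_diag_offDiag _), diag_union_offDiag, univ_product_univ,
    ← Fintype.sum_prod_type']

namespace Equiv.Perm

variable {α : Type*} [Fintype α] [DecidableEq α]

section AddCommMonoid

variable {M : Type*} [AddCommMonoid M]

theorem sum_comp_apply_eq_sum_comp_apply (f : α → M) (i k : α) :
    ∑ π : Perm α, f (π i) = ∑ π : Perm α, f (π k) :=
  (Fintype.sum_equiv (Equiv.mulRight (swap i k)) _ _ fun π => by simp).symm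

theorem card_smul_sum_comp_apply (f : α → M) (i : α) :
    Fintype.card α • ∑ π : Perm α, f (π i) = (Fintype.card α)! • ∑ j, f j := by
  calc Fintype.card α • ∑ π : Perm α, f (π i)
      = ∑ k : α, ∑ π : Perm α, f (π k) := by
        rw [← Finset.card_univ, ← sum_const]
        exact sum_congr rfl fun k _ => sum_comp_apply_eq_sum_comp_apply f i k
    _ = ∑ π : Perm α, ∑ j, f j :=
        sum_comm.trans (sum_congr rfl fun π _ => Equiv.sum_comp π f)
    _ = (Fintype.card α)! • ∑ j, f j := by
        rw [sum_const, Finset.card_univ, Fintype.card_perm]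

theorem sum_comp_apply₂_eq_sum_comp_apply₂ (g : α → α → M) {i k i' k' : α}
    (h : i ≠ k) (h' : i' ≠ k') :
    ∑ π : Perm α, g (π i) (π k) = ∑ π : Perm α, g (π i') (π k') := by
  obtain ⟨σ, hσi, hσk⟩ :=
    MulAction.is_two_pretransitive_iff.mp (isMultiplyPretransitive α 2) h' h
  refine Fintype.sum_equiv (Equiv.mulRight σ) _ _ fun π => ?_
  rw [← hσi, ← hσk]
  rfl

theorem card_offDiag_smul_sum_comp_apply₂ (g : α → α → M) {i k : α} (h : i ≠ k) :
    (Fintype.card α * (Fintype.card α - 1)) • ∑ π : Perm α, g (π i) (π k)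
      = (Fintype.card α)! • ∑ p ∈ univ.offDiag, g p.1 p.2 := by
  have hcard : #(univ.offDiag : Finset (α × α)) = Fintype.card α * (Fintype.card α - 1) := by
    rw [offDiag_card, Finset.card_univ, Nat.mul_sub_one]
  calc (Fintype.card α * (Fintype.card α - 1)) • ∑ π : Perm α, g (π i) (π k)
      = ∑ p ∈ univ.offDiag, ∑ π : Perm α, g (π p.1) (π p.2) := by
        rw [← hcard, ← sum_const]
        exact sum_congr rfl fun p hp =>
          sum_comp_apply₂_eq_sum_comp_apply₂ g h (mem_offDiag.mp hp).2.2
    _ = ∑ π : Perm α, ∑ p ∈ univ.offDiag, g p.1 p.2 :=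
        sum_comm.trans (sum_congr rfl fun π _ => π.sum_offDiag_comp g)
    _ = (Fintype.card α)! • ∑ p ∈ univ.offDiag, g p.1 p.2 := by
        rw [sum_const, Finset.card_univ, Fintype.card_perm]

end AddCommMonoid

variable {R : Type*} [CommRing R]

theorem sum_offDiag_sum_offDiag_mul (a : α → α → R) :
    ∑ p ∈ univ.offDiag, ∑ q ∈ univ.offDiag, a p.1 q.1 * a p.2 q.2
      = (∑ i, ∑ j, a i j) ^ 2 - ∑ i, (∑ j, a i j) ^ 2 - ∑ j, (∑ i, a i j) ^ 2
        + ∑ i, ∑ j, a i j ^ 2 := by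
  rw [sum_congr rfl fun p _ => sum_offDiag_eq_sum_sub_sum_diag (fun j l => a p.1 j * a p.2 l),
    sum_offDiag_eq_sum_sub_sum_diag
      (fun i k => ∑ j, ∑ l, a i j * a k l - ∑ j, a i j * a k j)]
  have hcol : ∑ j, (∑ i, a i j) ^ 2 = ∑ i, ∑ k, ∑ j, a i j * a k j := by
    simp only [sq, sum_mul_sum]
    rw [sum_comm]
    exact sum_congr rfl fun i _ => sum_comm
  rw [hcol]
  simp only [sum_sub_distrib, sq, sum_mul_sum]
  abel

theorem sq_sum_apply_eq (a : α → α → R) (π : Perm α) :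
    (∑ i, a i (π i)) ^ 2
      = ∑ i, a i (π i) ^ 2 + ∑ p ∈ univ.offDiag, a p.1 (π p.1) * a p.2 (π p.2) := by
  rw [sum_offDiag_eq_sum_sub_sum_diag (fun i k => a i (π i) * a k (π k)), sq, sum_mul_sum]
  simp only [sq]
  abel

theorem card_mul_sum_sum_apply (a : α → α → R) :
    (Fintype.card α : R) * ∑ π : Perm α, ∑ i, a i (π i)
      = (Fintype.card α)! * ∑ i, ∑ j, a i j := by
  rw [sum_comm, mul_sum, mul_sum]
  exact sum_congr rfl fun i _ => by
    simpa only [nsmul_eq_mul] using card_smul_sum_comp_apply (a i) i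

theorem card_mul_card_sub_one_mul_sum_sq_sum_apply (a : α → α → R) :
    (Fintype.card α : R) * (Fintype.card α - 1) * ∑ π : Perm α, (∑ i, a i (π i)) ^ 2
      = (Fintype.card α)! * ((∑ i, ∑ j, a i j) ^ 2 - ∑ i, (∑ j, a i j) ^ 2
          - ∑ j, (∑ i, a i j) ^ 2 + Fintype.card α * ∑ i, ∑ j, a i j ^ 2) := by
  have hdiag := card_mul_sum_sum_apply fun i j => a i j ^ 2
  have hoff : (Fintype.card α : R) * (Fintype.card α - 1)
        * ∑ π : Perm α, ∑ p ∈ univ.offDiag, a p.1 (π p.1) * a p.2 (π p.2)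
      = (Fintype.card α)! * ∑ p ∈ univ.offDiag, ∑ q ∈ univ.offDiag, a p.1 q.1 * a p.2 q.2 := by
    rw [sum_comm, mul_sum, mul_sum]
    refine sum_congr rfl fun p hp => ?_
    have h := card_offDiag_smul_sum_comp_apply₂ (fun j l => a p.1 j * a p.2 l)
      (mem_offDiag.mp hp).2.2
    rwa [nsmul_eq_mul, nsmul_eq_mul, Nat.cast_mul,
      Nat.cast_pred (Fintype.card_pos_iff.mpr ⟨p.1⟩)] at h
  simp only [sq_sum_apply_eq, sum_add_distrib, mul_add, hoff, sum_offDiag_sum_offDiag_mul]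
  linear_combination ((Fintype.card α : R) - 1) * hdiag

end Equiv.Perm

section Ex

variable {n : ℕ}

theorem Ex_nonneg {f : Perm (Fin n) → ℝ} (hf : ∀ π, 0 ≤ f π) : 0 ≤ Ex n f :=
  div_nonneg (sum_nonneg fun π _ => hf π) (Nat.cast_nonneg _)

theorem Ex_eq_apply_one (hn : n < 2) (f : Perm (Fin n) → ℝ) : Ex n f = f 1 := by
  have : Subsingleton (Fin n) := Fin.subsingleton_iff_le_one.mpr (by omega)
  rw [Ex, Fintype.sum_subsingleton _ 1, Nat.factorial_eq_one.mpr (by omega), Nat.cast_one,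
    div_one]

theorem Ex_sub_sq (X : Perm (Fin n) → ℝ) :
    Ex n (fun π => (X π - Ex n X) ^ 2) = Ex n (fun π => X π ^ 2) - Ex n X ^ 2 := by
  have hF : (n ! : ℝ) ≠ 0 := by positivity
  simp only [Ex, sub_sq, sum_add_distrib, sum_sub_distrib, ← sum_mul, ← mul_sum, sum_const,
    Finset.card_univ, Fintype.card_perm, Fintype.card_fin, nsmul_eq_mul]
  field_simp
  ring

theorem Ex_sum_apply (hn : n ≠ 0) (a : Fin n → Fin n → ℝ) :
    Ex n (fun π => ∑ i, a i (π i)) = (∑ i, ∑ j, a i j) / n := by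
  have h := Perm.card_mul_sum_sum_apply a
  rw [Fintype.card_fin] at h
  rw [Ex, div_eq_div_iff (by positivity) (by exact_mod_cast hn)]
  linear_combination h

theorem Ex_sq_sum_apply (hn : 2 ≤ n) (a : Fin n → Fin n → ℝ) :
    Ex n (fun π => (∑ i, a i (π i)) ^ 2)
      = ((∑ i, ∑ j, a i j) ^ 2 - ∑ i, (∑ j, a i j) ^ 2 - ∑ j, (∑ i, a i j) ^ 2
          + n * ∑ i, ∑ j, a i j ^ 2) / (n * (n - 1)) := by
  have h := Perm.card_mul_card_sub_one_mul_sum_sq_sum_apply a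
  have hn' : (2 : ℝ) ≤ n := by exact_mod_cast hn
  rw [Fintype.card_fin] at h
  rw [Ex, div_eq_div_iff (by positivity) (mul_ne_zero (by positivity) (by linarith))]
  linear_combination h

theorem sub_one_mul_Ex_sub_sq_le (hn : 2 ≤ n) (a : Fin n → Fin n → ℝ) :
    ((n : ℝ) - 1) * Ex n (fun π => (∑ i, a i (π i) - Ex n (fun π' => ∑ i, a i (π' i))) ^ 2)
      ≤ ∑ i, ∑ j, a i j ^ 2 := by
  have hn' : (2 : ℝ) ≤ n := by exact_mod_cast hn
  have hvar : (n : ℝ) ^ 2 * (((n : ℝ) - 1)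
        * Ex n (fun π => (∑ i, a i (π i) - Ex n (fun π' => ∑ i, a i (π' i))) ^ 2))
      = (∑ i, ∑ j, a i j) ^ 2 - n * ∑ i, (∑ j, a i j) ^ 2 - n * ∑ j, (∑ i, a i j) ^ 2
          + n ^ 2 * ∑ i, ∑ j, a i j ^ 2 := by
    have hn1 : (n : ℝ) - 1 ≠ 0 := by linarith
    rw [Ex_sub_sq, Ex_sum_apply (by omega), Ex_sq_sum_apply hn]
    field_simp
    ring
  have hCS : (∑ i, ∑ j, a i j) ^ 2 ≤ n * ∑ i, (∑ j, a i j) ^ 2 := by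
    simpa using sq_sum_le_card_mul_sum_sq (s := univ) (f := fun i => ∑ j, a i j)
  have hcol : 0 ≤ ∑ j, (∑ i, a i j) ^ 2 := by positivity
  refine le_of_mul_le_mul_left ?_ (by positivity : (0 : ℝ) < n ^ 2)
  rw [hvar]
  linarith [mul_nonneg (Nat.cast_nonneg (α := ℝ) n) hcol]

end Ex

theorem stmt_2_general (n : ℕ) (a : Fin n → Fin n → ℝ) :
    Ex n (fun π => ((∑ i, a i (π i)) - Ex n (fun π' => ∑ i, a i (π' i)))^2)
      ≤ (2 / n) * ∑ i, ∑ j, (a i j)^2 := by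
  rcases lt_or_ge n 2 with hn | hn
  · rw [Ex_eq_apply_one hn, Ex_eq_apply_one hn, sub_self, zero_pow two_ne_zero]
    positivity
  · have hvar := sub_one_mul_Ex_sub_sq_le hn a
    have hvar_nonneg := Ex_nonneg fun π => sq_nonneg
      (∑ i, a i (π i) - Ex n (fun π' => ∑ i, a i (π' i)))
    have hn' : (2 : ℝ) ≤ n := by exact_mod_cast hn
    rw [div_mul_eq_mul_div, le_div_iff₀ (by positivity)]
    linarith [mul_nonneg (sub_nonneg.mpr hn') hvar_nonneg]

/-- For nonnegative reals `a i j` and `Z = ∑ i, a i (Π i)` with `Π` a uniform random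
permutation, `Var(Z) ≤ (2/n) ∑_{i,j} a_{i,j}²`. -/
theorem stmt_2 (n : ℕ) (hn : 0 < n) (a : Fin n → Fin n → ℝ)
    (ha : ∀ i j, 0 ≤ a i j) :
    Ex n (fun π => ((∑ i, a i (π i)) - Ex n (fun π' => ∑ i, a i (π' i)))^2)
      ≤ (2 / n) * ∑ i, ∑ j, (a i j)^2 :=
  stmt_2_general n a
end

section
/- Let {a_{i,j}}_{1≤i,j≤n} be nonnegative reals, Π uniformly random on S_n, Z = ∑_i a_{i,Π(i)}, M = max_{i,j} a_{i,j}. Then for all x > 0, P(|Z - med(Z)| > sqrt(med(∑_i a_{i,Π(i)}²) · x) + x·M) ≤ 8 exp(-x/16). -/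
/-!
Fix a set `A` of permutations and a weight matrix `b ≥ 0`. Every `{0,1}`-vector of `U_A(π)`
marks a set of positions outside of which `π` agrees with some `τ ∈ A`, hence bounds
`Z_b(π) - Z_b(τ)` by `∑ sᵢ b_{i,π(i)}`; this bound survives convex combinations, so the point
of the convex hull nearest to `0` and Cauchy–Schwarz give some `τ ∈ A` with
`Z_b(π) - Z_b(τ) ≤ √(∑ᵢ b_{i,π(i)}²) · √(f_A(π))`.

Applied to `b = a²` and `B = {S ≤ med S}`, where `S = ∑ᵢ a_{i,π(i)}²`, this gives the
self-bounding inequality `S ≤ med S + M √S √(f_B)`, i.e. `√S ≤ √(med S) + M √(f_B)`.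
Applied to `b = a` and `A = {Z ≤ med Z}` (upper tail) or `A = {Z < med Z - t}` (lower tail),
any `π` deviating by more than `t = √(med S · x) + x M` must have `f_A(π) ≥ x` or
`f_B(π) ≥ x`, and Talagrand's inequality bounds both events by a multiple of `e^{-x/16}`.
-/

/-- Probability with respect to the uniform distribution on permutations of `{1,…,n}`. -/
noncomputable def Pr (n : ℕ) (p : Equiv.Perm (Fin n) → Prop) : ℝ :=
  (Nat.card {π : Equiv.Perm (Fin n) // p π} : ℝ) / (Nat.factorial n)

/-- Talagrand's set `U_A(π)` of `{0,1}`-vectors witnessing agreement with some `τ ∈ A`. -/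
def UA (n : ℕ) (A : Set (Equiv.Perm (Fin n))) (π : Equiv.Perm (Fin n)) :
    Set (Fin n → ℝ) :=
  {s | (∀ i, s i = 0 ∨ s i = 1) ∧ ∃ τ ∈ A, ∀ i, s i = 0 → τ i = π i}

/-- Talagrand's convex distance: squared Euclidean distance from `0` to the convex hull
of `U_A(π)`. -/
noncomputable def fA (n : ℕ) (A : Set (Equiv.Perm (Fin n))) (π : Equiv.Perm (Fin n)) : ℝ :=
  sInf ((fun v : Fin n → ℝ => ∑ i, (v i)^2) '' (convexHull ℝ (UA n A π)))

open Matrix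

section Probability

variable {n : ℕ}

lemma Pr_nonneg (p : Equiv.Perm (Fin n) → Prop) : 0 ≤ Pr n p := by
  unfold Pr
  positivity

lemma Pr_mono {p q : Equiv.Perm (Fin n) → Prop} (h : ∀ π, p π → q π) : Pr n p ≤ Pr n q := by
  classical
  unfold Pr
  gcongr
  simp only [Nat.card_eq_fintype_card]
  exact Fintype.card_subtype_mono p q h

lemma Pr_le_one (p : Equiv.Perm (Fin n) → Prop) : Pr n p ≤ 1 := by
  calc Pr n p ≤ Pr n (fun _ => True) := Pr_mono fun _ _ => trivial
    _ = 1 := by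
      rw [Pr, Nat.card_congr (Equiv.subtypeUnivEquiv fun _ => trivial), Nat.card_perm,
        Nat.card_eq_fintype_card, Fintype.card_fin]
      exact div_self (by positivity)

lemma Pr_or_le (p q : Equiv.Perm (Fin n) → Prop) :
    Pr n (fun π => p π ∨ q π) ≤ Pr n p + Pr n q := by
  classical
  unfold Pr
  rw [← add_div]
  gcongr
  simp only [Nat.card_eq_fintype_card]
  exact_mod_cast Fintype.card_subtype_or p q

lemma exists_of_Pr_pos {p : Equiv.Perm (Fin n) → Prop} (h : 0 < Pr n p) : ∃ π, p π := by
  by_contra! hp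
  have : IsEmpty {π // p π} := ⟨fun π => hp π.1 π.2⟩
  simp [Pr, Nat.card_of_isEmpty] at h

end Probability

section ConvexDistance

variable {n : ℕ}

def permSum (b : Fin n → Fin n → ℝ) (π : Equiv.Perm (Fin n)) : ℝ := ∑ i, b i (π i)

theorem convex_setOf_exists_le {𝕜 E β ι : Type*} [Semiring 𝕜] [PartialOrder 𝕜]
    [AddCommMonoid E] [Module 𝕜 E] [AddCommMonoid β] [LinearOrder β] [IsOrderedAddMonoid β]
    [Module 𝕜 β] [PosSMulMono 𝕜 β] {f : E → β} (hf : IsLinearMap 𝕜 f) (c : ι → β)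
    (A : Set ι) : Convex 𝕜 {w | ∃ τ ∈ A, c τ ≤ f w} := by
  rintro w₁ ⟨τ₁, h₁, hw₁⟩ w₂ ⟨τ₂, h₂, hw₂⟩ α β hα hβ hαβ
  rcases le_total (c τ₁) (c τ₂) with h | h
  · exact ⟨τ₁, h₁, convex_halfSpace_ge hf _ hw₁ (h.trans hw₂) hα hβ hαβ⟩
  · exact ⟨τ₂, h₂, convex_halfSpace_ge hf _ (h.trans hw₁) hw₂ hα hβ hαβ⟩

lemma UA_finite (A : Set (Equiv.Perm (Fin n))) (π : Equiv.Perm (Fin n)) :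
    (UA n A π).Finite :=
  (Set.Finite.pi fun _ => Set.toFinite {0, 1}).subset fun s hs i _ => by simpa using hs.1 i

lemma UA_nonempty {A : Set (Equiv.Perm (Fin n))} (hA : A.Nonempty) (π : Equiv.Perm (Fin n)) :
    (UA n A π).Nonempty :=
  ⟨fun _ => 1, fun _ => Or.inr rfl, hA.some, hA.some_mem, fun _ h => absurd h one_ne_zero⟩

lemma exists_mem_convexHull_sum_sq_eq_fA {A : Set (Equiv.Perm (Fin n))} (hA : A.Nonempty)
    (π : Equiv.Perm (Fin n)) : ∃ v ∈ convexHull ℝ (UA n A π), ∑ i, v i ^ 2 = fA n A π :=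
  (((UA_finite A π).isCompact_convexHull ℝ).image (by fun_prop)).sInf_mem
    (((UA_nonempty hA π).mono (subset_convexHull ℝ _)).image _)

lemma convexHull_UA_subset {b : Fin n → Fin n → ℝ} (hb : ∀ i j, 0 ≤ b i j)
    (A : Set (Equiv.Perm (Fin n))) (π : Equiv.Perm (Fin n)) :
    convexHull ℝ (UA n A π) ⊆
      {w | ∃ τ ∈ A, permSum b π - permSum b τ ≤ w ⬝ᵥ fun i => b i (π i)} := by
  refine convexHull_min ?_ (convex_setOf_exists_le
    ⟨fun u v => add_dotProduct u v _, fun c v => smul_dotProduct c v _⟩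
    (fun τ => permSum b π - permSum b τ) A)
  rintro s ⟨hs01, τ, hτA, hτ⟩
  refine ⟨τ, hτA, ?_⟩
  rw [permSum, permSum, ← Finset.sum_sub_distrib]
  refine Finset.sum_le_sum fun i _ => ?_
  rcases hs01 i with h | h
  · simp [h, hτ i h]
  · simp [h, hb i (τ i)]

lemma exists_mem_permSum_sub_le {b : Fin n → Fin n → ℝ} (hb : ∀ i j, 0 ≤ b i j)
    {A : Set (Equiv.Perm (Fin n))} (hA : A.Nonempty) (π : Equiv.Perm (Fin n)) :
    ∃ τ ∈ A, permSum b π - permSum b τ ≤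
      √(permSum (fun i j => b i j ^ 2) π) * √(fA n A π) := by
  obtain ⟨v, hv, hfv⟩ := exists_mem_convexHull_sum_sq_eq_fA hA π
  obtain ⟨τ, hτA, hle⟩ := convexHull_UA_subset hb A π hv
  refine ⟨τ, hτA, hle.trans ?_⟩
  rw [← hfv, mul_comm]
  exact Real.sum_mul_le_sqrt_mul_sqrt _ _ _

end ConvexDistance

section Deviation

variable {n : ℕ} {a : Fin n → Fin n → ℝ} {M m2 x : ℝ}

lemma le_add_of_sq_le_sq_add_mul {u s c : ℝ} (hs : 0 ≤ s) (hc : 0 ≤ c)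
    (h : u ^ 2 ≤ s ^ 2 + u * c) : u ≤ s + c := by
  nlinarith

lemma sqrt_sum_sq_sq_le {ι : Type*} (s : Finset ι) {f : ι → ℝ} (hM : 0 ≤ M)
    (hf₀ : ∀ i ∈ s, 0 ≤ f i) (hfM : ∀ i ∈ s, f i ≤ M) :
    √(∑ i ∈ s, (f i ^ 2) ^ 2) ≤ M * √(∑ i ∈ s, f i ^ 2) := by
  rw [← Real.sqrt_sq hM, ← Real.sqrt_mul (sq_nonneg M), Finset.mul_sum]
  refine Real.sqrt_le_sqrt (Finset.sum_le_sum fun i hi => ?_)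
  have := pow_le_pow_left₀ (hf₀ i hi) (hfM i hi) 2
  nlinarith [sq_nonneg (f i)]

lemma sqrt_permSum_sq_le (ha : ∀ i j, 0 ≤ a i j) (hM : 0 ≤ M) (haM : ∀ i j, a i j ≤ M)
    (hB : {τ | permSum (fun i j => a i j ^ 2) τ ≤ m2}.Nonempty) (π : Equiv.Perm (Fin n)) :
    √(permSum (fun i j => a i j ^ 2) π) ≤
      √m2 + M * √(fA n {τ | permSum (fun i j => a i j ^ 2) τ ≤ m2} π) := by
  obtain ⟨τ, hτ, hdev⟩ := exists_mem_permSum_sub_le (fun i j => sq_nonneg (a i j)) hB π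
  have hS : ∀ σ, 0 ≤ permSum (fun i j => a i j ^ 2) σ := fun σ =>
    Finset.sum_nonneg fun i _ => sq_nonneg _
  have hsq : √(permSum (fun i j => (a i j ^ 2) ^ 2) π) ≤
      M * √(permSum (fun i j => a i j ^ 2) π) :=
    sqrt_sum_sq_sq_le _ hM (fun i _ => ha i (π i)) fun i _ => haM i (π i)
  refine le_add_of_sq_le_sq_add_mul (Real.sqrt_nonneg _)
    (mul_nonneg hM (Real.sqrt_nonneg _)) ?_
  rw [Real.sq_sqrt (hS π), Real.sq_sqrt ((hS τ).trans hτ)]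
  have : permSum (fun i j => a i j ^ 2) τ ≤ m2 := hτ
  calc permSum (fun i j => a i j ^ 2) π
      ≤ m2 + √(permSum (fun i j => (a i j ^ 2) ^ 2) π) *
          √(fA n {τ | permSum (fun i j => a i j ^ 2) τ ≤ m2} π) := by linarith
    _ ≤ m2 + M * √(permSum (fun i j => a i j ^ 2) π) *
          √(fA n {τ | permSum (fun i j => a i j ^ 2) τ ≤ m2} π) := by gcongr
    _ = _ := by ring

lemma le_fA_or_le_fA_of_forall_lt_permSum_sub (ha : ∀ i j, 0 ≤ a i j) (hM : 0 ≤ M)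
    (haM : ∀ i j, a i j ≤ M) (hB : {τ | permSum (fun i j => a i j ^ 2) τ ≤ m2}.Nonempty)
    {A : Set (Equiv.Perm (Fin n))} (hA : A.Nonempty) (hx : 0 ≤ x) {π : Equiv.Perm (Fin n)}
    (hfar : ∀ τ ∈ A, √(m2 * x) + x * M < permSum a π - permSum a τ) :
    x ≤ fA n A π ∨ x ≤ fA n {τ | permSum (fun i j => a i j ^ 2) τ ≤ m2} π := by
  by_contra! h
  obtain ⟨τ, hτ, hdev⟩ := exists_mem_permSum_sub_le ha hA π
  have hfA : √(fA n A π) ≤ √x := Real.sqrt_le_sqrt h.1.le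
  have hS : √(permSum (fun i j => a i j ^ 2) π) ≤ √m2 + M * √x :=
    (sqrt_permSum_sq_le ha hM haM hB π).trans (by gcongr; exact h.2.le)
  have : √(permSum (fun i j => a i j ^ 2) π) * √(fA n A π) ≤ √(m2 * x) + x * M :=
    calc _ ≤ (√m2 + M * √x) * √x := by gcongr
      _ = √(m2 * x) + x * M := by
        rw [Real.sqrt_mul' _ hx, add_mul, mul_assoc, Real.mul_self_sqrt hx]
        ring
  linarith [hfar τ hτ]

end Deviation

def TalagrandInequality (n : ℕ) : Prop :=
  ∀ (A : Set (Equiv.Perm (Fin n))) (t : ℝ), 0 < t →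
    Pr n (fun π => fA n A π ≥ t^2) * Pr n (fun π => π ∈ A) ≤ Real.exp (-t^2/16)

namespace TalagrandInequality

variable {n : ℕ} {x : ℝ}

lemma Pr_le_fA_mul_le (hT : TalagrandInequality n) (A : Set (Equiv.Perm (Fin n))) (hx : 0 < x) :
    Pr n (fun π => fA n A π ≥ x) * Pr n (fun π => π ∈ A) ≤ Real.exp (-x / 16) := by
  have := hT A √x (Real.sqrt_pos.2 hx)
  rwa [Real.sq_sqrt hx.le] at this

lemma Pr_le_fA_le_of_half (hT : TalagrandInequality n) {p : Equiv.Perm (Fin n) → Prop}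
    (hp : 1 / 2 ≤ Pr n p) (hx : 0 < x) :
    Pr n (fun π => fA n {π | p π} π ≥ x) ≤ 2 * Real.exp (-x / 16) := by
  have hA : 1 / 2 ≤ Pr n (fun π => π ∈ {π | p π}) := hp
  nlinarith [hT.Pr_le_fA_mul_le {π | p π} hx, Pr_nonneg (fun π => fA n {π | p π} π ≥ x)]

variable {a : Fin n → Fin n → ℝ} {M m m2 : ℝ}

lemma Pr_add_lt_permSum_le (hT : TalagrandInequality n) (ha : ∀ i j, 0 ≤ a i j) (hM : 0 ≤ M)
    (haM : ∀ i j, a i j ≤ M) (hm : 1 / 2 ≤ Pr n (fun π => permSum a π ≤ m))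
    (hm2 : 1 / 2 ≤ Pr n (fun π => permSum (fun i j => a i j ^ 2) π ≤ m2)) (hx : 0 < x) :
    Pr n (fun π => m + (√(m2 * x) + x * M) < permSum a π) ≤ 4 * Real.exp (-x / 16) := by
  have hA : {π | permSum a π ≤ m}.Nonempty :=
    exists_of_Pr_pos (p := fun π => permSum a π ≤ m) (by linarith)
  have hB : {π | permSum (fun i j => a i j ^ 2) π ≤ m2}.Nonempty :=
    exists_of_Pr_pos (p := fun π => permSum (fun i j => a i j ^ 2) π ≤ m2) (by linarith)
  calc Pr n (fun π => m + (√(m2 * x) + x * M) < permSum a π)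
      ≤ Pr n (fun π => fA n {π | permSum a π ≤ m} π ≥ x ∨
          fA n {π | permSum (fun i j => a i j ^ 2) π ≤ m2} π ≥ x) :=
        Pr_mono fun π hπ => le_fA_or_le_fA_of_forall_lt_permSum_sub ha hM haM hB hA hx.le
          fun τ (hτ : permSum a τ ≤ m) => by linarith
    _ ≤ _ := Pr_or_le _ _
    _ ≤ 4 * Real.exp (-x / 16) := by
      linarith [hT.Pr_le_fA_le_of_half hm hx, hT.Pr_le_fA_le_of_half hm2 hx]

lemma Pr_permSum_lt_sub_le (hT : TalagrandInequality n) (ha : ∀ i j, 0 ≤ a i j) (hM : 0 ≤ M)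
    (haM : ∀ i j, a i j ≤ M) (hm : 1 / 2 ≤ Pr n (fun π => m ≤ permSum a π))
    (hm2 : 1 / 2 ≤ Pr n (fun π => permSum (fun i j => a i j ^ 2) π ≤ m2)) (hx : 0 < x)
    (he : 8 * Real.exp (-x / 16) ≤ 1) :
    Pr n (fun π => permSum a π < m - (√(m2 * x) + x * M)) ≤ 4 * Real.exp (-x / 16) := by
  set A := {π | permSum a π < m - (√(m2 * x) + x * M)}
  change Pr n (· ∈ A) ≤ _
  rcases (Pr_nonneg (· ∈ A)).eq_or_lt with h0 | hpos
  · exact h0 ▸ by positivity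
  have hB : {π | permSum (fun i j => a i j ^ 2) π ≤ m2}.Nonempty :=
    exists_of_Pr_pos (p := fun π => permSum (fun i j => a i j ^ 2) π ≤ m2) (by linarith)
  -- every `π` with `m ≤ Z(π)` is far from `A`, so by `he` a quarter of the mass is far from `A`
  have hfar : 1 / 2 ≤ Pr n (fun π => fA n A π ≥ x) + 2 * Real.exp (-x / 16) :=
    calc 1 / 2 ≤ Pr n (fun π => fA n A π ≥ x ∨
          fA n {π | permSum (fun i j => a i j ^ 2) π ≤ m2} π ≥ x) :=
        hm.trans <| Pr_mono fun π (hπ : m ≤ permSum a π) =>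
          le_fA_or_le_fA_of_forall_lt_permSum_sub ha hM haM hB (exists_of_Pr_pos hpos) hx.le
            fun τ (hτ : permSum a τ < m - (√(m2 * x) + x * M)) => by linarith
      _ ≤ _ := Pr_or_le _ _
      _ ≤ _ := by gcongr; exact hT.Pr_le_fA_le_of_half hm2 hx
  have hquarter : 1 / 4 ≤ Pr n (fun π => fA n A π ≥ x) := by linarith
  nlinarith [hT.Pr_le_fA_mul_le A hx, mul_le_mul_of_nonneg_right hquarter hpos.le]

end TalagrandInequality

theorem stmt_9_general (n : ℕ) (a : Fin n → Fin n → ℝ)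
    (ha : ∀ i j, 0 ≤ a i j)
    (M : ℝ) (hM : IsGreatest (Set.range fun p : Fin n × Fin n => a p.1 p.2) M)
    (m m2 : ℝ)
    (hm1 : Pr n (fun π => (∑ i, a i (π i)) ≥ m) ≥ 1/2)
    (hm2 : Pr n (fun π => (∑ i, a i (π i)) ≤ m) ≥ 1/2)
    (hm22 : Pr n (fun π => (∑ i, (a i (π i))^2) ≤ m2) ≥ 1/2)
    (talagrand : ∀ (A : Set (Equiv.Perm (Fin n))) (t : ℝ), 0 < t →
      Pr n (fun π => fA n A π ≥ t^2) * Pr n (fun π => π ∈ A) ≤ Real.exp (-t^2/16)) :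
    ∀ x : ℝ, 0 < x →
      Pr n (fun π => |(∑ i, a i (π i)) - m| > Real.sqrt (m2 * x) + x * M)
        ≤ 8 * Real.exp (-x/16) := by
  intro x hx
  rcases le_or_gt 1 (8 * Real.exp (-x / 16)) with he | he
  · exact (Pr_le_one _).trans he
  have hT : TalagrandInequality n := talagrand
  have haM : ∀ i j, a i j ≤ M := fun i j => hM.2 ⟨(i, j), rfl⟩
  have hM0 : 0 ≤ M := by
    obtain ⟨p, hp⟩ := hM.1
    exact hp ▸ ha p.1 p.2
  calc Pr n (fun π => |(∑ i, a i (π i)) - m| > √(m2 * x) + x * M)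
      ≤ Pr n (fun π => m + (√(m2 * x) + x * M) < permSum a π ∨
          permSum a π < m - (√(m2 * x) + x * M)) :=
        Pr_mono fun π hπ => by
          simp only [permSum]
          rcases lt_abs.mp hπ with h | h
          exacts [.inl (by linarith), .inr (by linarith)]
    _ ≤ 4 * Real.exp (-x / 16) + 4 * Real.exp (-x / 16) :=
        (Pr_or_le _ _).trans <| add_le_add (hT.Pr_add_lt_permSum_le ha hM0 haM hm2 hm22 hx)
          (hT.Pr_permSum_lt_sub_le ha hM0 haM hm1 hm22 hx he.le)
    _ = 8 * Real.exp (-x / 16) := by ring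

/-- Concentration of a permuted sum of nonnegative terms around its median, assuming
Talagrand's convex-distance inequality for random permutations. -/
theorem stmt_9 (n : ℕ) (hn : 0 < n) (a : Fin n → Fin n → ℝ)
    (ha : ∀ i j, 0 ≤ a i j)
    (M : ℝ) (hM : IsGreatest (Set.range fun p : Fin n × Fin n => a p.1 p.2) M)
    (m m2 : ℝ)
    (hm1 : Pr n (fun π => (∑ i, a i (π i)) ≥ m) ≥ 1/2)
    (hm2 : Pr n (fun π => (∑ i, a i (π i)) ≤ m) ≥ 1/2)
    (hm21 : Pr n (fun π => (∑ i, (a i (π i))^2) ≥ m2) ≥ 1/2)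
    (hm22 : Pr n (fun π => (∑ i, (a i (π i))^2) ≤ m2) ≥ 1/2)
    (talagrand : ∀ (A : Set (Equiv.Perm (Fin n))) (t : ℝ), 0 < t →
      Pr n (fun π => fA n A π ≥ t^2) * Pr n (fun π => π ∈ A) ≤ Real.exp (-t^2/16)) :
    ∀ x : ℝ, 0 < x →
      Pr n (fun π => |(∑ i, a i (π i)) - m| > Real.sqrt (m2 * x) + x * M)
        ≤ 8 * Real.exp (-x/16) :=
  stmt_9_general n a ha M hM m m2 hm1 hm2 hm22 talagrand
end

section
/- Let {a_{i,j}}_{1≤i,j≤n} be nonnegative reals, Π uniformly random on S_n, Z = ∑_i a_{i,Π(i)}, V = (1/n)∑_{i,j} a_{i,j}², M = max_{i,j} a_{i,j}. Then |E[Z] - med(Z)| ≤ √(2V). -/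
open Finset Function Equiv
open scoped Nat

theorem sum_mul_sum_eq_sum_mul_add_sum_offDiag {ι R : Type*} [DecidableEq ι] [CommSemiring R]
    (s : Finset ι) (x y : ι → R) :
    (∑ i ∈ s, x i) * ∑ i ∈ s, y i = ∑ i ∈ s, x i * y i + ∑ p ∈ s.offDiag, x p.1 * y p.2 := by
  rw [sum_mul_sum, ← sum_product', ← diag_union_offDiag, sum_union (disjoint_diag_offDiag s),
    sum_diag]

theorem sq_sum_eq_sum_sq_add_sum_offDiag {ι R : Type*} [DecidableEq ι] [CommSemiring R]
    (s : Finset ι) (x : ι → R) :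
    (∑ i ∈ s, x i) ^ 2 = ∑ i ∈ s, x i ^ 2 + ∑ p ∈ s.offDiag, x p.1 * x p.2 := by
  simp only [sq, sum_mul_sum_eq_sum_mul_add_sum_offDiag]

theorem sum_sub_mean_sq_le_sum_sq {ι : Type*} [Fintype ι] (x : ι → ℝ) :
    ∑ j, (x j - (∑ k, x k) / Fintype.card ι) ^ 2 ≤ ∑ j, x j ^ 2 := by
  set N : ℝ := (Fintype.card ι : ℝ)
  set S := ∑ k, x k
  have hexpand : ∑ j, (x j - S / N) ^ 2 = ∑ j, x j ^ 2 - S / N * (2 * S - N * (S / N)) := by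
    simp only [sub_sq, sum_add_distrib, sum_sub_distrib, ← sum_mul, ← mul_sum, sum_const,
      card_univ, nsmul_eq_mul]
    ring
  rcases eq_or_ne N 0 with hN | hN
  · simp [hN]
  rw [hexpand, mul_div_cancel₀ S hN, sub_le_self_iff, two_mul, add_sub_cancel_right,
    div_mul_eq_mul_div]
  exact div_nonneg (mul_self_nonneg S) (Nat.cast_nonneg _)

section Median

variable {ι : Type*} [Fintype ι]

theorem card_mul_sub_le_sum_abs_sub (f : ι → ℝ) {μ m : ℝ}
    (hμ : ∑ i, f i = Fintype.card ι * μ) (hm : m ≤ μ)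
    (hle : (Fintype.card ι : ℝ) ≤ 2 * #{i | f i ≤ m}) :
    Fintype.card ι * (μ - m) ≤ ∑ i, |f i - μ| := by
  have hpoint : ∀ i, f i - μ + 2 * (if f i ≤ m then μ - m else 0) ≤ |f i - μ| := by
    intro i
    split_ifs with h
    · rw [abs_of_nonpos (by linarith)]; linarith
    · simpa using le_abs_self (f i - μ)
  calc (Fintype.card ι : ℝ) * (μ - m) ≤ 2 * #{i | f i ≤ m} * (μ - m) := by
        gcongr
    _ = ∑ i, (f i - μ + 2 * (if f i ≤ m then μ - m else 0)) := by
        rw [sum_add_distrib, sum_sub_distrib, hμ, ← mul_sum, sum_ite, sum_const_zero, sum_const,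
          sum_const, card_univ, nsmul_eq_mul, nsmul_eq_mul]
        ring
    _ ≤ ∑ i, |f i - μ| := sum_le_sum fun i _ => hpoint i

theorem card_mul_abs_sub_le_sum_abs_sub (f : ι → ℝ) {μ m : ℝ}
    (hμ : ∑ i, f i = Fintype.card ι * μ)
    (hle : (Fintype.card ι : ℝ) ≤ 2 * #{i | f i ≤ m})
    (hge : (Fintype.card ι : ℝ) ≤ 2 * #{i | m ≤ f i}) :
    Fintype.card ι * |μ - m| ≤ ∑ i, |f i - μ| := by
  rcases le_total m μ with h | h
  · rw [abs_of_nonneg (sub_nonneg.2 h)]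
    exact card_mul_sub_le_sum_abs_sub f hμ h hle
  · have hneg := card_mul_sub_le_sum_abs_sub (fun i => -f i) (μ := -μ) (m := -m)
      (by simp [hμ]) (neg_le_neg h) (by simpa using hge)
    rw [abs_sub_comm, abs_of_nonneg (sub_nonneg.2 h)]
    simpa [neg_add_eq_sub, ← abs_neg (f _ - μ)] using hneg

theorem abs_sub_le_sqrt_of_median [Nonempty ι] (f : ι → ℝ) {μ m : ℝ}
    (hμ : ∑ i, f i = Fintype.card ι * μ)
    (hle : (Fintype.card ι : ℝ) ≤ 2 * #{i | f i ≤ m})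
    (hge : (Fintype.card ι : ℝ) ≤ 2 * #{i | m ≤ f i}) :
    |μ - m| ≤ √((∑ i, (f i - μ) ^ 2) / Fintype.card ι) := by
  have hcard : (0 : ℝ) < Fintype.card ι := by exact_mod_cast Fintype.card_pos
  rw [Real.le_sqrt (abs_nonneg _) (by positivity), le_div_iff₀ hcard]
  have hCS : (∑ i, |f i - μ|) ^ 2 ≤ Fintype.card ι * ∑ i, (f i - μ) ^ 2 := by
    simpa only [sq_abs, card_univ] using
      sq_sum_le_card_mul_sum_sq (s := univ) (f := fun i => |f i - μ|)
  have hmed := card_mul_abs_sub_le_sum_abs_sub f hμ hle hge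
  nlinarith [pow_le_pow_left₀ (by positivity) hmed 2]

end Median

namespace Equiv.Perm

variable {α : Type*} [Fintype α]

theorem sum_offDiag_apply_apply {M : Type*} [AddCommMonoid M] (σ : Perm α) (F : α → α → M) :
    ∑ p ∈ (univ : Finset α).offDiag, F (σ p.1) (σ p.2)
      = ∑ p ∈ (univ : Finset α).offDiag, F p.1 p.2 :=
  sum_equiv (σ.prodCongr σ) (by simp [σ.injective.ne_iff]) (by simp)

variable [DecidableEq α] {M : Type*} [AddCommMonoid M]

theorem sum_comp_eq_of_injective {ι : Type*} [Finite ι] (G : (ι → α) → M) {f g : ι → α}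
    (hf : Injective f) (hg : Injective g) :
    ∑ σ : Perm α, G (σ ∘ f) = ∑ σ : Perm α, G (σ ∘ g) := by
  obtain ⟨τ, hτ⟩ := exists_extending_pair f g hf hg
  rw [← Equiv.sum_comp (Equiv.mulRight τ)]
  congr! 2 with σ
  ext a
  simp [hτ]

theorem sum_apply_eq (g : α → M) (i k : α) :
    ∑ σ : Perm α, g (σ i) = ∑ σ : Perm α, g (σ k) :=
  sum_comp_eq_of_injective (fun v : Unit → α => g (v ())) (f := fun _ => i) (g := fun _ => k)
    (injective_of_subsingleton _) (injective_of_subsingleton _)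

theorem sum_apply_apply_eq (F : α → α → M) {i i' k k' : α} (hi : i ≠ i') (hk : k ≠ k') :
    ∑ σ : Perm α, F (σ i) (σ i') = ∑ σ : Perm α, F (σ k) (σ k') :=
  sum_comp_eq_of_injective (fun v : Fin 2 → α => F (v 0) (v 1)) (f := ![i, i']) (g := ![k, k'])
    (by simp [Injective, Fin.forall_fin_two, hi, hi.symm])
    (by simp [Injective, Fin.forall_fin_two, hk, hk.symm])

theorem card_mul_sum_apply (g : α → ℝ) (i : α) :
    Fintype.card α * ∑ σ : Perm α, g (σ i) = (Fintype.card α)! * ∑ j, g j := by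
  calc (Fintype.card α : ℝ) * ∑ σ : Perm α, g (σ i) = ∑ k, ∑ σ : Perm α, g (σ k) := by
        simp [sum_apply_eq g _ i]
    _ = ∑ σ : Perm α, ∑ k, g (σ k) := sum_comm
    _ = (Fintype.card α)! * ∑ j, g j := by
        simp [Equiv.sum_comp, Fintype.card_perm]

theorem card_mul_card_sub_one_mul_sum_apply_apply (F : α → α → ℝ) {i i' : α} (hi : i ≠ i') :
    Fintype.card α * (Fintype.card α - 1 : ℝ) * ∑ σ : Perm α, F (σ i) (σ i')
      = (Fintype.card α)! * ∑ p ∈ (univ : Finset α).offDiag, F p.1 p.2 := by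
  have hcard : (#(univ : Finset α).offDiag : ℝ) = Fintype.card α * (Fintype.card α - 1) := by
    rw [offDiag_card, card_univ, Nat.cast_sub (Nat.le_mul_self _)]
    push_cast
    ring
  calc _ = ∑ p ∈ (univ : Finset α).offDiag, ∑ σ : Perm α, F (σ p.1) (σ p.2) := by
        rw [sum_congr rfl fun p hp => sum_apply_apply_eq F (mem_offDiag.1 hp).2.2 hi, sum_const,
          nsmul_eq_mul, hcard]
    _ = ∑ σ : Perm α, ∑ p ∈ (univ : Finset α).offDiag, F (σ p.1) (σ p.2) := sum_comm
    _ = _ := by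
        simp [sum_offDiag_apply_apply, Fintype.card_perm]

end Equiv.Perm

section Variance

open Equiv.Perm

variable {α : Type*} [Fintype α] [DecidableEq α]

theorem card_mul_card_sub_one_mul_sum_perm_sq (b : α → α → ℝ) (hb : ∀ i, ∑ j, b i j = 0) :
    Fintype.card α * (Fintype.card α - 1 : ℝ) * ∑ σ : Perm α, (∑ i, b i (σ i)) ^ 2
      = (Fintype.card α)! *
          (Fintype.card α * ∑ i, ∑ j, b i j ^ 2 - ∑ j, (∑ i, b i j) ^ 2) := by
  set N : ℝ := (Fintype.card α : ℝ)
  have hdiag : ∀ i, N * (N - 1) * ∑ σ : Perm α, b i (σ i) ^ 2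
      = (N - 1) * ((Fintype.card α)! * ∑ j, b i j ^ 2) := by
    intro i
    rw [← card_mul_sum_apply (fun j => b i j ^ 2)]
    ring
  have hoff : ∀ p ∈ (univ : Finset α).offDiag,
      N * (N - 1) * ∑ σ : Perm α, b p.1 (σ p.1) * b p.2 (σ p.2)
        = -((Fintype.card α)! * ∑ j, b p.1 j * b p.2 j) := by
    intro p hp
    have hrows := sum_mul_sum_eq_sum_mul_add_sum_offDiag univ (b p.1) (b p.2)
    rw [hb, zero_mul] at hrows
    rw [card_mul_card_sub_one_mul_sum_apply_apply (fun j j' => b p.1 j * b p.2 j')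
      (mem_offDiag.1 hp).2.2]
    linear_combination -(Fintype.card α)! * hrows
  have hcols : ∑ p ∈ (univ : Finset α).offDiag, ∑ j, b p.1 j * b p.2 j
      = ∑ j, (∑ i, b i j) ^ 2 - ∑ i, ∑ j, b i j ^ 2 := by
    rw [sum_comm, sum_comm (γ := α) (t := univ) (f := fun i j => b i j ^ 2), ← sum_sub_distrib]
    refine sum_congr rfl fun j _ => ?_
    rw [sq_sum_eq_sum_sq_add_sum_offDiag]
    ring
  calc N * (N - 1) * ∑ σ : Perm α, (∑ i, b i (σ i)) ^ 2
      = ∑ i, N * (N - 1) * ∑ σ : Perm α, b i (σ i) ^ 2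
        + ∑ p ∈ (univ : Finset α).offDiag,
            N * (N - 1) * ∑ σ : Perm α, b p.1 (σ p.1) * b p.2 (σ p.2) := by
        simp only [sq_sum_eq_sum_sq_add_sum_offDiag, sum_add_distrib, ← mul_sum, ← mul_add]
        congr 2 <;> exact sum_comm
    _ = _ := by
        rw [sum_congr rfl fun i _ => hdiag i, sum_congr rfl hoff, sum_neg_distrib]
        simp only [← mul_sum]
        rw [hcols]
        ring

theorem sum_perm_sq_le (b : α → α → ℝ) :
    ∑ σ : Perm α, (∑ i, b i (σ i)) ^ 2 ≤ (Fintype.card α)! * ∑ i, ∑ j, b i j ^ 2 := by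
  calc ∑ σ : Perm α, (∑ i, b i (σ i)) ^ 2
      ≤ ∑ σ : Perm α, Fintype.card α * ∑ i, b i (σ i) ^ 2 :=
        sum_le_sum fun σ _ => by
          simpa using sq_sum_le_card_mul_sum_sq (s := univ) (f := fun i => b i (σ i))
    _ = ∑ i, Fintype.card α * ∑ σ : Perm α, b i (σ i) ^ 2 := by
        rw [← mul_sum, sum_comm, mul_sum]
    _ = (Fintype.card α)! * ∑ i, ∑ j, b i j ^ 2 := by
        rw [mul_sum]
        exact sum_congr rfl fun i _ => card_mul_sum_apply (fun j => b i j ^ 2) i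

theorem card_mul_sum_perm_sq_le (b : α → α → ℝ) (hb : ∀ i, ∑ j, b i j = 0) :
    Fintype.card α * ∑ σ : Perm α, (∑ i, b i (σ i)) ^ 2
      ≤ 2 * (Fintype.card α)! * ∑ i, ∑ j, b i j ^ 2 := by
  set N : ℝ := (Fintype.card α : ℝ)
  have hN : 0 ≤ N := Nat.cast_nonneg _
  have hfine : N * ((N - 1) * ∑ σ : Perm α, (∑ i, b i (σ i)) ^ 2)
      ≤ N * ((Fintype.card α)! * ∑ i, ∑ j, b i j ^ 2) := by
    rw [← mul_assoc, card_mul_card_sub_one_mul_sum_perm_sq b hb]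
    have hcols : 0 ≤ ∑ j, (∑ i, b i j) ^ 2 := by positivity
    nlinarith [mul_nonneg (Nat.cast_nonneg (α := ℝ) (Fintype.card α)!) hcols]
  have hcrude := sum_perm_sq_le b
  rcases hN.eq_or_lt with h | h
  · rw [← h, zero_mul]
    positivity
  nlinarith [le_of_mul_le_mul_left hfine h]

theorem sum_apply_perm_sub_mean (a : α → α → ℝ) (σ : Perm α) :
    ∑ i, a i (σ i) - (∑ τ : Perm α, ∑ i, a i (τ i)) / (Fintype.card α)!
      = ∑ i, (a i (σ i) - (∑ j, a i j) / Fintype.card α) := by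
  have hmean : ∀ i, (∑ τ : Perm α, a i (τ i)) / (Fintype.card α)!
      = (∑ j, a i j) / Fintype.card α := by
    intro i
    have hN : (Fintype.card α : ℝ) ≠ 0 := Nat.cast_ne_zero.2 (Fintype.card_pos_iff.2 ⟨i⟩).ne'
    rw [div_eq_div_iff (by positivity) hN]
    linarith [card_mul_sum_apply (a i) i]
  rw [sum_comm, sum_div, sum_congr rfl fun i _ => hmean i, sum_sub_distrib]

theorem card_mul_sum_perm_sq_sub_mean_le (a : α → α → ℝ) :
    Fintype.card α * ∑ σ : Perm α,
        (∑ i, a i (σ i) - (∑ τ : Perm α, ∑ i, a i (τ i)) / (Fintype.card α)!) ^ 2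
      ≤ 2 * (Fintype.card α)! * ∑ i, ∑ j, a i j ^ 2 := by
  simp only [sum_apply_perm_sub_mean]
  have hrows : ∀ i, ∑ j, (a i j - (∑ k, a i k) / Fintype.card α) = 0 := by
    intro i
    have hN : (Fintype.card α : ℝ) ≠ 0 := Nat.cast_ne_zero.2 (Fintype.card_pos_iff.2 ⟨i⟩).ne'
    rw [sum_sub_distrib, sum_const, card_univ, nsmul_eq_mul, mul_div_cancel₀ _ hN, sub_self]
  calc _ ≤ 2 * (Fintype.card α)! * ∑ i, ∑ j, (a i j - (∑ k, a i k) / Fintype.card α) ^ 2 :=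
        card_mul_sum_perm_sq_le _ hrows
    _ ≤ 2 * (Fintype.card α)! * ∑ i, ∑ j, a i j ^ 2 := by
        have hfact : (0 : ℝ) ≤ 2 * (Fintype.card α)! := by positivity
        exact mul_le_mul_of_nonneg_left
          (sum_le_sum fun i _ => sum_sub_mean_sq_le_sum_sq (a i)) hfact

end Variance

theorem card_perm_le_of_half_le_Pr {n : ℕ} {p : Perm (Fin n) → Prop} [DecidablePred p]
    (hp : 1 / 2 ≤ Pr n p) : (Fintype.card (Perm (Fin n)) : ℝ) ≤ 2 * #{π | p π} := by
  rw [Pr, Nat.card_eq_fintype_card, Fintype.card_subtype, le_div_iff₀ (by positivity)] at hp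
  rw [Fintype.card_perm, Fintype.card_fin]
  linarith

theorem stmt_10_general (n : ℕ) (hn : 0 < n) (a : Fin n → Fin n → ℝ)
    (m : ℝ)
    (hm1 : Pr n (fun π => (∑ i, a i (π i)) ≥ m) ≥ 1/2)
    (hm2 : Pr n (fun π => (∑ i, a i (π i)) ≤ m) ≥ 1/2) :
    |Ex n (fun π => ∑ i, a i (π i)) - m|
      ≤ Real.sqrt (2 * ((1/n) * ∑ i, ∑ j, (a i j)^2)) := by
  have hcard : (Fintype.card (Perm (Fin n)) : ℝ) = n ! := by
    rw [Fintype.card_perm, Fintype.card_fin]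
  have hEx : ∑ π : Perm (Fin n), ∑ i, a i (π i)
      = Fintype.card (Perm (Fin n)) * Ex n (fun π => ∑ i, a i (π i)) := by
    rw [Ex, hcard, mul_div_cancel₀ _ (by positivity)]
  have hvar := card_mul_sum_perm_sq_sub_mean_le a
  rw [Fintype.card_fin] at hvar
  calc |Ex n (fun π => ∑ i, a i (π i)) - m|
      ≤ √((∑ π : Perm (Fin n), (∑ i, a i (π i) - Ex n (fun π => ∑ i, a i (π i))) ^ 2)
          / Fintype.card (Perm (Fin n))) :=
        abs_sub_le_sqrt_of_median _ hEx (card_perm_le_of_half_le_Pr hm2)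
          (card_perm_le_of_half_le_Pr hm1)
    _ ≤ √(2 * ((1 / n) * ∑ i, ∑ j, a i j ^ 2)) := by
        gcongr
        have hn' : (0 : ℝ) < n := by exact_mod_cast hn
        rw [hcard, div_le_iff₀ (by positivity), ← mul_le_mul_iff_of_pos_left hn']
        exact hvar.trans_eq (by field_simp)

/-- The mean and a median of a permuted sum of nonnegative terms differ by at most
`√(2V)`, with `V = (1/n) ∑_{i,j} a_{i,j}²`. -/
theorem stmt_10 (n : ℕ) (hn : 0 < n) (a : Fin n → Fin n → ℝ)
    (ha : ∀ i j, 0 ≤ a i j) (m : ℝ)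
    (hm1 : Pr n (fun π => (∑ i, a i (π i)) ≥ m) ≥ 1/2)
    (hm2 : Pr n (fun π => (∑ i, a i (π i)) ≤ m) ≥ 1/2) :
    |Ex n (fun π => ∑ i, a i (π i)) - m|
      ≤ Real.sqrt (2 * ((1/n) * ∑ i, ∑ j, (a i j)^2)) :=
  stmt_10_general n hn a m hm1 hm2
end

section
/- Let n ≥ 4 and (X_1,…,X_n) be i.i.d. pairs X_i = (X_i¹, X_i²) with distribution P on X². Let φ : X² → ℝ be measurable with E_P[φ²] := E[φ(X_1¹,X_1²)²] < ∞ and E_⊥[φ²] := E[φ(X_1¹,X_2²)²] < ∞. Let T = (1/(n(n-1))) ∑_{i≠j} (φ(X_i¹,X_i²) - φ(X_i¹,X_j²)). Then Var(T) ≤ (1/n)(√(E_P[φ²]) + 2√(E_⊥[φ²]))². -/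
open MeasureTheory ProbabilityTheory
open scoped ENNReal

section helpers
variable {Ω : Type*} [MeasurableSpace Ω] {μ : Measure Ω}

lemma my_integrable_mul {f g : Ω → ℝ} (hf : MemLp f 2 μ) (hg : MemLp g 2 μ) :
    Integrable (fun ω => f ω * g ω) μ := by
  rw [← memLp_one_iff_integrable]
  have h121 : (1:ℝ≥0∞)/1 = 1/2 + 1/2 := by
    simp only [one_div, inv_one]
    exact ENNReal.inv_two_add_inv_two.symm
  have := hf.smul (φ := g) (p := 2) (r := 1) hg
  have heq : g • f = fun ω => f ω * g ω := by funext ω; simp [smul_eq_mul, mul_comm]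
  rwa [heq] at this

lemma my_cauchy_schwarz {f g : Ω → ℝ} (hf : MemLp f 2 μ) (hg : MemLp g 2 μ) :
    |∫ ω, f ω * g ω ∂μ| ≤ Real.sqrt (∫ ω, (f ω)^2 ∂μ) * Real.sqrt (∫ ω, (g ω)^2 ∂μ) := by
  have hconj : Real.HolderConjugate 2 2 := Real.HolderConjugate.two_two
  have h2 : (ENNReal.ofReal (2:ℝ)) = 2 := by norm_num
  have key := integral_mul_norm_le_Lp_mul_Lq (μ := μ) (f := f) (g := g) hconj
    (by rw [h2]; exact hf) (by rw [h2]; exact hg)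
  have h1 : |∫ ω, f ω * g ω ∂μ| ≤ ∫ ω, ‖f ω‖ * ‖g ω‖ ∂μ := by
    calc |∫ ω, f ω * g ω ∂μ| ≤ ∫ ω, ‖f ω * g ω‖ ∂μ := by
          simpa using norm_integral_le_integral_norm (fun ω => f ω * g ω)
      _ = ∫ ω, ‖f ω‖ * ‖g ω‖ ∂μ := by simp [norm_mul]
  have hfs : (∫ a, ‖f a‖ ^ (2:ℝ) ∂μ) ^ ((1:ℝ) / 2) = Real.sqrt (∫ ω, (f ω)^2 ∂μ) := by
    rw [Real.sqrt_eq_rpow]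
    congr 1
    refine integral_congr_ae (Filter.Eventually.of_forall fun x => ?_)
    show ‖f x‖ ^ (2:ℝ) = f x ^ 2
    rw [Real.rpow_two, Real.norm_eq_abs, sq_abs]
  have hgs : (∫ a, ‖g a‖ ^ (2:ℝ) ∂μ) ^ ((1:ℝ) / 2) = Real.sqrt (∫ ω, (g ω)^2 ∂μ) := by
    rw [Real.sqrt_eq_rpow]
    congr 1
    refine integral_congr_ae (Filter.Eventually.of_forall fun x => ?_)
    show ‖g x‖ ^ (2:ℝ) = g x ^ 2
    rw [Real.rpow_two, Real.norm_eq_abs, sq_abs]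
  calc |∫ ω, f ω * g ω ∂μ| ≤ ∫ ω, ‖f ω‖ * ‖g ω‖ ∂μ := h1
    _ ≤ (∫ a, ‖f a‖ ^ (2:ℝ) ∂μ) ^ ((1:ℝ)/2) * (∫ a, ‖g a‖ ^ (2:ℝ) ∂μ) ^ ((1:ℝ)/2) := key
    _ = _ := by rw [hfs, hgs]

lemma my_ite_nonneg {p : Prop} [Decidable p] {x : ℝ} (hx : 0 ≤ x) : 0 ≤ if p then x else 0 := by
  split <;> simp [hx]

lemma my_sum_e {n : ℕ} (i : Fin n) : (∑ j : Fin n, if i = j then (0:ℝ) else 1) = (n:ℝ) - 1 := by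
  have : (∑ j : Fin n, if i = j then (0:ℝ) else 1)
      = ∑ j : Fin n, (1 - if i = j then (1:ℝ) else 0) := by
    refine Finset.sum_congr rfl fun j _ => ?_
    split <;> norm_num
  rw [this, Finset.sum_sub_distrib]
  simp [Finset.sum_ite_eq]

lemma my_sum_e' {n : ℕ} (i : Fin n) : (∑ j : Fin n, if j = i then (0:ℝ) else 1) = (n:ℝ) - 1 := by
  rw [← my_sum_e i]
  exact Finset.sum_congr rfl fun j _ => by simp [eq_comm]

end helpers

theorem my_core {Ω : Type*} [MeasurableSpace Ω] (μ : Measure Ω) [IsProbabilityMeasure μ]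
    (n : ℕ) (hn : 4 ≤ n)
    (Zf : Fin n → Fin n → Ω → ℝ)
    (a b mY mZ vY vZ : ℝ)
    (ha : 0 ≤ a) (hb : 0 ≤ b) (hvZ0 : 0 ≤ vZ) (hvYa : vY ≤ a) (hvZb : vZ ≤ b)
    (hmem : ∀ i j, MemLp (Zf i j) 2 μ)
    (hEY : ∀ i, ∫ ω, Zf i i ω ∂μ = mY)
    (hEZ : ∀ i j, i ≠ j → ∫ ω, Zf i j ω ∂μ = mZ)
    (hVY : ∀ i, ∫ ω, (Zf i i ω - mY)^2 ∂μ = vY)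
    (hVZ : ∀ i j, i ≠ j → ∫ ω, (Zf i j ω - mZ)^2 ∂μ = vZ)
    (hYY : ∀ i k, i ≠ k → ∫ ω, (Zf i i ω - mY) * (Zf k k ω - mY) ∂μ = 0)
    (hYZ : ∀ i k l, k ≠ l → i ≠ k → i ≠ l → ∫ ω, (Zf i i ω - mY) * (Zf k l ω - mZ) ∂μ = 0)
    (hZY : ∀ i j k, i ≠ j → k ≠ i → k ≠ j → ∫ ω, (Zf i j ω - mZ) * (Zf k k ω - mY) ∂μ = 0)
    (hZZ : ∀ i j k l, i ≠ j → k ≠ l → i ≠ k → i ≠ l → j ≠ k → j ≠ l →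
        ∫ ω, (Zf i j ω - mZ) * (Zf k l ω - mZ) ∂μ = 0) :
    ProbabilityTheory.variance (fun ω => (1 / ((n : ℝ) * ((n : ℝ) - 1))) *
        ∑ i, ∑ j, if i = j then 0 else (Zf i i ω - Zf i j ω)) μ
      ≤ (1 / n) * (Real.sqrt a + 2 * Real.sqrt b)^2 := by
  classical
  have hn4 : (4:ℝ) ≤ (n:ℝ) := by exact_mod_cast hn
  have hnpos : (0:ℝ) < n := by linarith
  have hn1pos : (0:ℝ) < (n:ℝ) - 1 := by linarith
  set c : ℝ := 1 / ((n : ℝ) * ((n : ℝ) - 1)) with hc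
  set sab : ℝ := Real.sqrt a * Real.sqrt b with hsab
  have hsab0 : 0 ≤ sab := mul_nonneg (Real.sqrt_nonneg _) (Real.sqrt_nonneg _)
  have hvY0 : 0 ≤ vY := by rw [← hVY ⟨0, by omega⟩]; exact integral_nonneg fun ω => sq_nonneg _
  -- centered variables
  set η : Fin n → Fin n → Ω → ℝ :=
    fun i j ω => if i = j then 0 else (Zf i i ω - mY) - (Zf i j ω - mZ) with hη
  have hYmem : ∀ i, MemLp (fun ω => Zf i i ω - mY) 2 μ :=
    fun i => (hmem i i).sub (memLp_const mY)
  have hZmem : ∀ i j, MemLp (fun ω => Zf i j ω - mZ) 2 μ :=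
    fun i j => (hmem i j).sub (memLp_const mZ)
  have hηmem : ∀ i j, MemLp (η i j) 2 μ := by
    intro i j
    by_cases h : i = j
    · simp only [hη, if_pos h]
      exact memLp_const 0
    · simp only [hη, if_neg h]
      exact (hYmem i).sub (hZmem i j)
  -- the summands of T
  set g : Fin n → Fin n → Ω → ℝ :=
    fun i j ω => if i = j then 0 else Zf i i ω - Zf i j ω with hg
  have hgmem : ∀ i j, MemLp (g i j) 2 μ := by
    intro i j
    by_cases h : i = j
    · simp only [hg, if_pos h]; exact memLp_const 0
    · simp only [hg, if_neg h]; exact (hmem i i).sub (hmem i j)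
  have hgint : ∀ i j, Integrable (g i j) μ := fun i j => (hgmem i j).integrable one_le_two
  have hEg : ∀ i j, ∫ ω, g i j ω ∂μ = if i = j then 0 else mY - mZ := by
    intro i j
    by_cases h : i = j
    · simp only [hg, if_pos h]; simp
    · simp only [hg, if_neg h]
      rw [integral_sub ((hmem i i).integrable one_le_two) ((hmem i j).integrable one_le_two),
        hEY i, hEZ i j h]
  set S : Ω → ℝ := fun ω => ∑ i, ∑ j, g i j ω with hS
  set T : Ω → ℝ := fun ω => c * S ω with hT
  have hSmem : MemLp S 2 μ :=
    memLp_finsetSum _ fun i _ => memLp_finsetSum _ fun j _ => hgmem i j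
  have hTmem : MemLp T 2 μ := hSmem.const_mul c
  have hET : ∫ ω, T ω ∂μ = c * ∑ i : Fin n, ∑ j : Fin n, (if i = j then 0 else mY - mZ) := by
    rw [hT]
    simp only
    rw [integral_const_mul]
    congr 1
    rw [hS]
    simp only
    rw [integral_finset_sum _ (fun i _ => integrable_finset_sum _ (fun j _ => hgint i j))]
    refine Finset.sum_congr rfl fun i _ => ?_
    rw [integral_finset_sum _ (fun j _ => hgint i j)]
    exact Finset.sum_congr rfl fun j _ => hEg i j
  have hpt : ∀ ω, T ω - ∫ ω', T ω' ∂μ = c * ∑ i, ∑ j, η i j ω := by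
    intro ω
    rw [hET, hT]
    simp only
    rw [← mul_sub]
    congr 1
    rw [hS]
    simp only
    rw [← Finset.sum_sub_distrib]
    refine Finset.sum_congr rfl fun i _ => ?_
    rw [← Finset.sum_sub_distrib]
    refine Finset.sum_congr rfl fun j _ => ?_
    by_cases h : i = j
    · simp [hg, hη, h]
    · simp only [hg, hη, if_neg h]
      ring
  have hne1 : ((n:ℝ)) ≠ 0 := ne_of_gt hnpos
  have hne2 : ((n:ℝ) - 1) ≠ 0 := ne_of_gt hn1pos
  -- variance as an integral
  have hvar : ProbabilityTheory.variance T μ = ∫ ω, (c * ∑ i, ∑ j, η i j ω)^2 ∂μ := by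
    rw [variance_eq_integral hTmem.aestronglyMeasurable.aemeasurable]
    refine integral_congr_ae (Filter.Eventually.of_forall fun ω => ?_)
    simp only [Pi.pow_apply, Pi.sub_apply]
    rw [← hpt ω]
  have hvar2 : ProbabilityTheory.variance T μ = c^2 * ∑ p : Fin n × Fin n, ∑ q : Fin n × Fin n,
      ∫ ω, η p.1 p.2 ω * η q.1 q.2 ω ∂μ := by
    rw [hvar]
    have hpair : ∀ ω : Ω, (∑ i, ∑ j, η i j ω) = ∑ p : Fin n × Fin n, η p.1 p.2 ω := by
      intro ω
      rw [← Finset.univ_product_univ, Finset.sum_product]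
    have hsq : ∀ ω : Ω, (∑ p : Fin n × Fin n, η p.1 p.2 ω)^2
        = ∑ p : Fin n × Fin n, ∑ q : Fin n × Fin n, η p.1 p.2 ω * η q.1 q.2 ω := by
      intro ω; rw [sq, Finset.sum_mul_sum]
    simp_rw [mul_pow, hpair, hsq]
    rw [integral_const_mul]
    congr 1
    rw [integral_finset_sum _ (fun p _ => integrable_finset_sum _ fun q _ =>
      my_integrable_mul (hηmem p.1 p.2) (hηmem q.1 q.2))]
    exact Finset.sum_congr rfl fun p _ => integral_finset_sum _ fun q _ =>
      my_integrable_mul (hηmem p.1 p.2) (hηmem q.1 q.2)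
  -- per-term bound
  have key : ∀ p q : Fin n × Fin n,
      (∫ ω, η p.1 p.2 ω * η q.1 q.2 ω ∂μ) ≤
      (if p.1 = p.2 then 0 else 1) * (if q.1 = q.2 then 0 else 1) *
        ((if p.1 = q.1 then a + 2*sab + b else 0) + (if p.1 = q.2 then sab + b else 0)
          + (if p.2 = q.1 then sab + b else 0) + (if p.2 = q.2 then b else 0)) := by
    rintro ⟨i, j⟩ ⟨k, l⟩
    simp only
    by_cases hij : i = j
    · have hL : ∫ ω, η i j ω * η k l ω ∂μ = 0 := by simp [hη, hij]
      rw [hL, if_pos hij, zero_mul, zero_mul]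
    · by_cases hkl : k = l
      · have hL : ∫ ω, η i j ω * η k l ω ∂μ = 0 := by simp [hη, hkl]
        rw [hL, if_pos hkl, mul_zero, zero_mul]
      · rw [if_neg hij, if_neg hkl, one_mul, one_mul]
        have m1 := hYmem i
        have m2 := hZmem i j
        have m3 := hYmem k
        have m4 := hZmem k l
        have hexp : ∫ ω, η i j ω * η k l ω ∂μ
            = (∫ ω, (Zf i i ω - mY) * (Zf k k ω - mY) ∂μ)
              - (∫ ω, (Zf i i ω - mY) * (Zf k l ω - mZ) ∂μ)
              - (∫ ω, (Zf i j ω - mZ) * (Zf k k ω - mY) ∂μ)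
              + (∫ ω, (Zf i j ω - mZ) * (Zf k l ω - mZ) ∂μ) := by
          have hpt2 : ∀ ω : Ω, η i j ω * η k l ω
              = (Zf i i ω - mY) * (Zf k k ω - mY) - (Zf i i ω - mY) * (Zf k l ω - mZ)
                - (Zf i j ω - mZ) * (Zf k k ω - mY) + (Zf i j ω - mZ) * (Zf k l ω - mZ) := by
            intro ω; simp only [hη, if_neg hij, if_neg hkl]; ring
          have I1 : Integrable (fun ω => (Zf i i ω - mY) * (Zf k k ω - mY)) μ :=
            my_integrable_mul m1 m3
          have I2 : Integrable (fun ω => (Zf i i ω - mY) * (Zf k l ω - mZ)) μ :=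
            my_integrable_mul m1 m4
          have I3 : Integrable (fun ω => (Zf i j ω - mZ) * (Zf k k ω - mY)) μ :=
            my_integrable_mul m2 m3
          have I4 : Integrable (fun ω => (Zf i j ω - mZ) * (Zf k l ω - mZ)) μ :=
            my_integrable_mul m2 m4
          have I12 : Integrable (fun ω => (Zf i i ω - mY) * (Zf k k ω - mY)
              - (Zf i i ω - mY) * (Zf k l ω - mZ)) μ := I1.sub I2
          have I123 : Integrable (fun ω => (Zf i i ω - mY) * (Zf k k ω - mY)
              - (Zf i i ω - mY) * (Zf k l ω - mZ) - (Zf i j ω - mZ) * (Zf k k ω - mY)) μ :=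
            I12.sub I3
          rw [integral_congr_ae (Filter.Eventually.of_forall hpt2),
            integral_add I123 I4, integral_sub I12 I3, integral_sub I1 I2]
        have b11 : (∫ ω, (Zf i i ω - mY) * (Zf k k ω - mY) ∂μ) ≤ (if i = k then vY else 0) := by
          by_cases hik : i = k
          · subst hik
            rw [if_pos rfl]
            have hpt3 : ∀ ω : Ω, (Zf i i ω - mY) * (Zf i i ω - mY) = (Zf i i ω - mY)^2 :=
              fun ω => (sq _).symm
            rw [integral_congr_ae (Filter.Eventually.of_forall hpt3), hVY i]
          · rw [hYY i k hik, if_neg hik]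
        have b12 : -(∫ ω, (Zf i i ω - mY) * (Zf k l ω - mZ) ∂μ)
            ≤ (if i = k then sab else 0) + (if i = l then sab else 0) := by
          by_cases h : i = k ∨ i = l
          · have habs : |∫ ω, (Zf i i ω - mY) * (Zf k l ω - mZ) ∂μ| ≤ sab := by
              calc |∫ ω, (Zf i i ω - mY) * (Zf k l ω - mZ) ∂μ|
                  ≤ Real.sqrt (∫ ω, (Zf i i ω - mY)^2 ∂μ) * Real.sqrt (∫ ω, (Zf k l ω - mZ)^2 ∂μ) :=
                    my_cauchy_schwarz m1 m4
                _ = Real.sqrt vY * Real.sqrt vZ := by rw [hVY i, hVZ k l hkl]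
                _ ≤ Real.sqrt a * Real.sqrt b :=
                    mul_le_mul (Real.sqrt_le_sqrt hvYa) (Real.sqrt_le_sqrt hvZb)
                      (Real.sqrt_nonneg _) (Real.sqrt_nonneg _)
                _ = sab := hsab.symm
            have hneg : -(∫ ω, (Zf i i ω - mY) * (Zf k l ω - mZ) ∂μ) ≤ sab :=
              (neg_le_abs _).trans habs
            have e1 : (0:ℝ) ≤ (if i = k then sab else 0) := my_ite_nonneg hsab0
            have e2 : (0:ℝ) ≤ (if i = l then sab else 0) := my_ite_nonneg hsab0
            rcases h with h|h
            · rw [if_pos h]; linarith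
            · rw [if_pos h]; linarith
          · push_neg at h
            rw [hYZ i k l hkl h.1 h.2, if_neg h.1, if_neg h.2]; norm_num
        have b21 : -(∫ ω, (Zf i j ω - mZ) * (Zf k k ω - mY) ∂μ)
            ≤ (if i = k then sab else 0) + (if j = k then sab else 0) := by
          by_cases h : i = k ∨ j = k
          · have habs : |∫ ω, (Zf i j ω - mZ) * (Zf k k ω - mY) ∂μ| ≤ sab := by
              calc |∫ ω, (Zf i j ω - mZ) * (Zf k k ω - mY) ∂μ|
                  ≤ Real.sqrt (∫ ω, (Zf i j ω - mZ)^2 ∂μ) * Real.sqrt (∫ ω, (Zf k k ω - mY)^2 ∂μ) :=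
                    my_cauchy_schwarz m2 m3
                _ = Real.sqrt vZ * Real.sqrt vY := by rw [hVZ i j hij, hVY k]
                _ ≤ Real.sqrt b * Real.sqrt a :=
                    mul_le_mul (Real.sqrt_le_sqrt hvZb) (Real.sqrt_le_sqrt hvYa)
                      (Real.sqrt_nonneg _) (Real.sqrt_nonneg _)
                _ = sab := by rw [hsab, mul_comm]
            have hneg : -(∫ ω, (Zf i j ω - mZ) * (Zf k k ω - mY) ∂μ) ≤ sab :=
              (neg_le_abs _).trans habs
            have e1 : (0:ℝ) ≤ (if i = k then sab else 0) := my_ite_nonneg hsab0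
            have e2 : (0:ℝ) ≤ (if j = k then sab else 0) := my_ite_nonneg hsab0
            rcases h with h|h
            · rw [if_pos h]; linarith
            · rw [if_pos h]; linarith
          · push_neg at h
            rw [hZY i j k hij h.1.symm h.2.symm, if_neg h.1, if_neg h.2]; norm_num
        have b22 : (∫ ω, (Zf i j ω - mZ) * (Zf k l ω - mZ) ∂μ)
            ≤ (if i = k then b else 0) + (if i = l then b else 0)
              + (if j = k then b else 0) + (if j = l then b else 0) := by
          by_cases h : i = k ∨ i = l ∨ j = k ∨ j = l
          · have hble : (∫ ω, (Zf i j ω - mZ) * (Zf k l ω - mZ) ∂μ) ≤ b := by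
              calc (∫ ω, (Zf i j ω - mZ) * (Zf k l ω - mZ) ∂μ)
                  ≤ |∫ ω, (Zf i j ω - mZ) * (Zf k l ω - mZ) ∂μ| := le_abs_self _
                _ ≤ Real.sqrt (∫ ω, (Zf i j ω - mZ)^2 ∂μ) * Real.sqrt (∫ ω, (Zf k l ω - mZ)^2 ∂μ) :=
                    my_cauchy_schwarz m2 m4
                _ = Real.sqrt vZ * Real.sqrt vZ := by rw [hVZ i j hij, hVZ k l hkl]
                _ = vZ := Real.mul_self_sqrt hvZ0
                _ ≤ b := hvZb
            have e1 : (0:ℝ) ≤ (if i = k then b else 0) := my_ite_nonneg hb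
            have e2 : (0:ℝ) ≤ (if i = l then b else 0) := my_ite_nonneg hb
            have e3 : (0:ℝ) ≤ (if j = k then b else 0) := my_ite_nonneg hb
            have e4 : (0:ℝ) ≤ (if j = l then b else 0) := my_ite_nonneg hb
            rcases h with h|h|h|h
            · rw [if_pos h]; linarith
            · rw [if_pos h]; linarith
            · rw [if_pos h]; linarith
            · rw [if_pos h]; linarith
          · push_neg at h
            rw [hZZ i j k l hij hkl h.1 h.2.1 h.2.2.1 h.2.2.2,
              if_neg h.1, if_neg h.2.1, if_neg h.2.2.1, if_neg h.2.2.2]; norm_num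
        have hgroup : (if i = k then vY else 0)
            + ((if i = k then sab else 0) + (if i = l then sab else 0))
            + ((if i = k then sab else 0) + (if j = k then sab else 0))
            + ((if i = k then b else 0) + (if i = l then b else 0)
              + (if j = k then b else 0) + (if j = l then b else 0))
            ≤ (if i = k then a + 2*sab + b else 0) + (if i = l then sab + b else 0)
              + (if j = k then sab + b else 0) + (if j = l then b else 0) := by
          split_ifs <;> linarith
        linarith [hexp, b11, b12, b21, b22, hgroup]
  -- summation of the bound
  have inner1 : ∀ (w : Fin n) (x : ℝ),
      (∑ q : Fin n × Fin n, (if q.1 = q.2 then (0:ℝ) else 1) * (if w = q.1 then x else 0))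
      = ((n:ℝ)-1) * x := by
    intro w x
    rw [← Finset.univ_product_univ, Finset.sum_product]
    have hk : ∀ k : Fin n, (∑ l : Fin n, (if k = l then (0:ℝ) else 1) * (if w = k then x else 0))
        = ((n:ℝ)-1) * (if w = k then x else 0) := by
      intro k; rw [← Finset.sum_mul, my_sum_e k]
    simp_rw [hk]
    rw [← Finset.mul_sum, Finset.sum_ite_eq]
    simp
  have inner2 : ∀ (w : Fin n) (x : ℝ),
      (∑ q : Fin n × Fin n, (if q.1 = q.2 then (0:ℝ) else 1) * (if w = q.2 then x else 0))
      = ((n:ℝ)-1) * x := by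
    intro w x
    rw [← Finset.univ_product_univ, Finset.sum_product]
    rw [Finset.sum_comm]
    have hl : ∀ l : Fin n, (∑ k : Fin n, (if k = l then (0:ℝ) else 1) * (if w = l then x else 0))
        = ((n:ℝ)-1) * (if w = l then x else 0) := by
      intro l; rw [← Finset.sum_mul, my_sum_e' l]
    simp_rw [hl]
    rw [← Finset.mul_sum, Finset.sum_ite_eq]
    simp
  have hsum_q : ∀ p : Fin n × Fin n,
      (∑ q : Fin n × Fin n, (if q.1 = q.2 then (0:ℝ) else 1) *
        ((if p.1 = q.1 then a + 2*sab + b else 0) + (if p.1 = q.2 then sab + b else 0)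
          + (if p.2 = q.1 then sab + b else 0) + (if p.2 = q.2 then b else 0)))
      = ((n:ℝ) - 1) * (a + 4*sab + 4*b) := by
    intro p
    have hsplit : ∀ q : Fin n × Fin n, (if q.1 = q.2 then (0:ℝ) else 1) *
        ((if p.1 = q.1 then a + 2*sab + b else 0) + (if p.1 = q.2 then sab + b else 0)
          + (if p.2 = q.1 then sab + b else 0) + (if p.2 = q.2 then b else 0))
        = (if q.1 = q.2 then (0:ℝ) else 1) * (if p.1 = q.1 then a + 2*sab + b else 0)
          + (if q.1 = q.2 then (0:ℝ) else 1) * (if p.1 = q.2 then sab + b else 0)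
          + (if q.1 = q.2 then (0:ℝ) else 1) * (if p.2 = q.1 then sab + b else 0)
          + (if q.1 = q.2 then (0:ℝ) else 1) * (if p.2 = q.2 then b else 0) := by
      intro q; ring
    simp_rw [hsplit]
    rw [Finset.sum_add_distrib, Finset.sum_add_distrib, Finset.sum_add_distrib,
      inner1 p.1 _, inner2 p.1 _, inner1 p.2 _, inner2 p.2 _]
    ring
  have hEP : (∑ p : Fin n × Fin n, (if p.1 = p.2 then (0:ℝ) else 1)) = (n:ℝ) * ((n:ℝ)-1) := by
    rw [← Finset.univ_product_univ, Finset.sum_product]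
    simp_rw [my_sum_e]
    rw [Finset.sum_const, Finset.card_univ]
    simp [nsmul_eq_mul, Fintype.card_fin]
  have hsum_total : (∑ p : Fin n × Fin n, ∑ q : Fin n × Fin n,
      (if p.1 = p.2 then (0:ℝ) else 1) * (if q.1 = q.2 then (0:ℝ) else 1) *
        ((if p.1 = q.1 then a + 2*sab + b else 0) + (if p.1 = q.2 then sab + b else 0)
          + (if p.2 = q.1 then sab + b else 0) + (if p.2 = q.2 then b else 0)))
      = (n:ℝ) * ((n:ℝ)-1) * (((n:ℝ)-1) * (a + 4*sab + 4*b)) := by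
    have hp : ∀ p : Fin n × Fin n, (∑ q : Fin n × Fin n,
        (if p.1 = p.2 then (0:ℝ) else 1) * (if q.1 = q.2 then (0:ℝ) else 1) *
          ((if p.1 = q.1 then a + 2*sab + b else 0) + (if p.1 = q.2 then sab + b else 0)
            + (if p.2 = q.1 then sab + b else 0) + (if p.2 = q.2 then b else 0)))
        = (if p.1 = p.2 then (0:ℝ) else 1) * (((n:ℝ) - 1) * (a + 4*sab + 4*b)) := by
      intro p
      simp_rw [mul_assoc]
      rw [← Finset.mul_sum, hsum_q p]
    simp_rw [hp]
    rw [← Finset.sum_mul, hEP]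
  -- put everything together
  have hM : (0:ℝ) ≤ a + 4*sab + 4*b := by positivity
  calc ProbabilityTheory.variance T μ
      = c^2 * ∑ p : Fin n × Fin n, ∑ q : Fin n × Fin n,
          ∫ ω, η p.1 p.2 ω * η q.1 q.2 ω ∂μ := hvar2
    _ ≤ c^2 * ∑ p : Fin n × Fin n, ∑ q : Fin n × Fin n,
          (if p.1 = p.2 then (0:ℝ) else 1) * (if q.1 = q.2 then (0:ℝ) else 1) *
            ((if p.1 = q.1 then a + 2*sab + b else 0) + (if p.1 = q.2 then sab + b else 0)
              + (if p.2 = q.1 then sab + b else 0) + (if p.2 = q.2 then b else 0)) := by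
        refine mul_le_mul_of_nonneg_left ?_ (sq_nonneg c)
        exact Finset.sum_le_sum fun p _ => Finset.sum_le_sum fun q _ => key p q
    _ = c^2 * ((n:ℝ) * ((n:ℝ)-1) * (((n:ℝ)-1) * (a + 4*sab + 4*b))) := by rw [hsum_total]
    _ = (1/(n:ℝ)) * (a + 4*sab + 4*b) := by
        rw [hc]; field_simp
    _ = (1/(n:ℝ)) * (Real.sqrt a + 2*Real.sqrt b)^2 := by
        congr 1
        have h1 : Real.sqrt a ^ 2 = a := Real.sq_sqrt ha
        have h2 : Real.sqrt b ^ 2 = b := Real.sq_sqrt hb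
        rw [hsab, show (Real.sqrt a + 2*Real.sqrt b)^2
          = Real.sqrt a^2 + 4*(Real.sqrt a*Real.sqrt b) + 4*Real.sqrt b^2 from by ring, h1, h2]


section transfer
variable {Ω 𝒴 : Type*} [MeasurableSpace Ω] [MeasurableSpace 𝒴] {μ : Measure Ω}

lemma my_map_integral {h : Ω → 𝒴} (hh : Measurable h) {ν : Measure 𝒴} (hmap : μ.map h = ν)
    {F : 𝒴 → ℝ} (hF : Measurable F) : ∫ ω, F (h ω) ∂μ = ∫ y, F y ∂ν := by
  rw [← hmap, integral_map hh.aemeasurable hF.aestronglyMeasurable]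

lemma my_map_memℒp {h : Ω → 𝒴} (hh : Measurable h) {ν : Measure 𝒴} (hmap : μ.map h = ν)
    {F : 𝒴 → ℝ} (hF : Measurable F) (hFν : MemLp F 2 ν) : MemLp (fun ω => F (h ω)) 2 μ := by
  rw [← hmap] at hFν
  exact (memLp_map_measure_iff hF.aestronglyMeasurable hh.aemeasurable).1 hFν

lemma my_map_memℒp' {h : Ω → 𝒴} (hh : Measurable h) {ν : Measure 𝒴} (hmap : μ.map h = ν)
    {F : 𝒴 → ℝ} (hF : Measurable F) (hFμ : MemLp (fun ω => F (h ω)) 2 μ) : MemLp F 2 ν := by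
  rw [← hmap]
  exact (memLp_map_measure_iff hF.aestronglyMeasurable hh.aemeasurable).2 hFμ

lemma my_indep_integral_mul {f g : Ω → ℝ} (h : ProbabilityTheory.IndepFun f g μ)
    (hf : Integrable f μ) (hg : Integrable g μ) :
    ∫ ω, f ω * g ω ∂μ = (∫ ω, f ω ∂μ) * ∫ ω, g ω ∂μ :=
  h.integral_fun_mul_eq_mul_integral hf.aestronglyMeasurable hg.aestronglyMeasurable

end transfer


theorem stmt_16_aux {Ω 𝒳 : Type*} [MeasurableSpace Ω] [MeasurableSpace 𝒳]
    (μ : Measure Ω) [IsProbabilityMeasure μ]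
    (n : ℕ) (hn : 4 ≤ n)
    (X : Fin n → Ω → 𝒳 × 𝒳)
    (hmeas : ∀ i, Measurable (X i))
    (hindep : ProbabilityTheory.iIndepFun X μ)
    (P : Measure (𝒳 × 𝒳))
    (hident : ∀ i, Measure.map (X i) μ = P)
    (φ : 𝒳 × 𝒳 → ℝ) (hφ : Measurable φ)
    (i0 i1 : Fin n) (hi01 : i0 ≠ i1)
    (hP2 : MeasureTheory.MemLp (fun ω => φ ((X i0 ω).1, (X i0 ω).2)) 2 μ)
    (hI2 : MeasureTheory.MemLp (fun ω => φ ((X i0 ω).1, (X i1 ω).2)) 2 μ)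
:
    ProbabilityTheory.variance (fun ω => (1 / ((n : ℝ) * ((n : ℝ) - 1))) *
        ∑ i, ∑ j, if i = j then 0 else
          (φ ((X i ω).1, (X i ω).2) - φ ((X i ω).1, (X j ω).2))) μ
      ≤ (1 / n) *
        (Real.sqrt (∫ ω, (φ ((X i0 ω).1, (X i0 ω).2))^2 ∂μ)
          + 2 * Real.sqrt (∫ ω, (φ ((X i0 ω).1, (X i1 ω).2))^2 ∂μ))^2 := by
  classical
  haveI hPprob : IsProbabilityMeasure P := by
    rw [← hident i0]; exact Measure.isProbabilityMeasure_map (hmeas i0).aemeasurable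
  set Q : Measure ((𝒳 × 𝒳) × (𝒳 × 𝒳)) := P.prod P with hQ
  haveI : IsProbabilityMeasure Q := by rw [hQ]; infer_instance
  set ψ : (𝒳 × 𝒳) × (𝒳 × 𝒳) → ℝ := fun y => φ (y.1.1, y.2.2) with hψdef
  have hψ : Measurable ψ := hφ.comp ((measurable_fst.fst).prodMk (measurable_snd.snd))
  have hpairmeas : ∀ i j : Fin n, Measurable (fun ω => (X i ω, X j ω)) :=
    fun i j => (hmeas i).prodMk (hmeas j)
  have hpairmap : ∀ i j, i ≠ j → μ.map (fun ω => (X i ω, X j ω)) = Q := by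
    intro i j hij
    have h := hindep.indepFun hij
    rw [ProbabilityTheory.indepFun_iff_map_prod_eq_prod_map_map
      (hmeas i).aemeasurable (hmeas j).aemeasurable] at h
    rw [h, hident i, hident j]
  set Zf : Fin n → Fin n → Ω → ℝ := fun i j ω => φ ((X i ω).1, (X j ω).2) with hZf
  have hφP : MemLp φ 2 P := my_map_memℒp' (hmeas i0) (hident i0) hφ hP2
  have hψQ : MemLp ψ 2 Q := my_map_memℒp' (hpairmeas i0 i1) (hpairmap i0 i1 hi01) hψ hI2
  have hmem : ∀ i j, MemLp (Zf i j) 2 μ := by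
    intro i j
    by_cases h : i = j
    · subst h; exact my_map_memℒp (hmeas i) (hident i) hφ hφP
    · exact my_map_memℒp (hpairmeas i j) (hpairmap i j h) hψ hψQ
  set mY : ℝ := ∫ x, φ x ∂P with hmY
  set mZ : ℝ := ∫ y, ψ y ∂Q with hmZ
  have hEY : ∀ i, ∫ ω, Zf i i ω ∂μ = mY := fun i => my_map_integral (hmeas i) (hident i) hφ
  have hEZ : ∀ i j, i ≠ j → ∫ ω, Zf i j ω ∂μ = mZ :=
    fun i j hij => my_map_integral (hpairmeas i j) (hpairmap i j hij) hψ
  set vY : ℝ := ∫ x, (φ x - mY)^2 ∂P with hvY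
  set vZ : ℝ := ∫ y, (ψ y - mZ)^2 ∂Q with hvZ
  have hVY : ∀ i, ∫ ω, (Zf i i ω - mY)^2 ∂μ = vY :=
    fun i => my_map_integral (hmeas i) (hident i) ((hφ.sub measurable_const).pow_const 2)
  have hVZ : ∀ i j, i ≠ j → ∫ ω, (Zf i j ω - mZ)^2 ∂μ = vZ :=
    fun i j hij => my_map_integral (hpairmeas i j) (hpairmap i j hij)
      ((hψ.sub measurable_const).pow_const 2)
  set A : ℝ := ∫ ω, (φ ((X i0 ω).1, (X i0 ω).2))^2 ∂μ with hA
  set B : ℝ := ∫ ω, (φ ((X i0 ω).1, (X i1 ω).2))^2 ∂μ with hB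
  have hA0 : 0 ≤ A := integral_nonneg fun ω => sq_nonneg _
  have hB0 : 0 ≤ B := integral_nonneg fun ω => sq_nonneg _
  have hvZ0 : 0 ≤ vZ := integral_nonneg fun y => sq_nonneg _
  have hAP : A = ∫ x, (φ x)^2 ∂P := my_map_integral (hmeas i0) (hident i0) (hφ.pow_const 2)
  have hBQ : B = ∫ y, (ψ y)^2 ∂Q :=
    my_map_integral (hpairmeas i0 i1) (hpairmap i0 i1 hi01) (hψ.pow_const 2)
  have hvYA : vY ≤ A := by
    have h1 : ProbabilityTheory.variance φ P = vY := by
      rw [variance_eq_integral hφ.aemeasurable]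
    have h2 := ProbabilityTheory.variance_le_expectation_sq (μ := P) (X := φ)
      hφ.aestronglyMeasurable
    have h3 : (∫ x, (φ ^ 2) x ∂P) = ∫ x, (φ x)^2 ∂P :=
      integral_congr_ae (Filter.Eventually.of_forall fun x => by simp [Pi.pow_apply])
    rw [h1, h3] at h2
    rw [hAP]
    exact h2
  have hvZB : vZ ≤ B := by
    have h1 : ProbabilityTheory.variance ψ Q = vZ := by
      rw [variance_eq_integral hψ.aemeasurable]
    have h2 := ProbabilityTheory.variance_le_expectation_sq (μ := Q) (X := ψ)
      hψ.aestronglyMeasurable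
    have h3 : (∫ y, (ψ ^ 2) y ∂Q) = ∫ y, (ψ y)^2 ∂Q :=
      integral_congr_ae (Filter.Eventually.of_forall fun y => by simp [Pi.pow_apply])
    rw [h1, h3] at h2
    rw [hBQ]
    exact h2
  -- centered expectations
  have hEYc : ∀ i, ∫ ω, (Zf i i ω - mY) ∂μ = 0 := by
    intro i
    rw [integral_sub ((hmem i i).integrable one_le_two) (integrable_const mY), hEY i]
    simp
  have hEZc : ∀ i j, i ≠ j → ∫ ω, (Zf i j ω - mZ) ∂μ = 0 := by
    intro i j hij
    rw [integral_sub ((hmem i j).integrable one_le_two) (integrable_const mZ), hEZ i j hij]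
    simp
  have hYint : ∀ i, Integrable (fun ω => Zf i i ω - mY) μ :=
    fun i => ((hmem i i).sub (memLp_const mY)).integrable one_le_two
  have hZint : ∀ i j, Integrable (fun ω => Zf i j ω - mZ) μ :=
    fun i j => ((hmem i j).sub (memLp_const mZ)).integrable one_le_two
  -- orthogonality
  have hYY : ∀ i k, i ≠ k → ∫ ω, (Zf i i ω - mY) * (Zf k k ω - mY) ∂μ = 0 := by
    intro i k hik
    have hInd : ProbabilityTheory.IndepFun (fun ω => Zf i i ω - mY) (fun ω => Zf k k ω - mY) μ :=
      (hindep.indepFun hik).comp (hφ.sub measurable_const) (hφ.sub measurable_const)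
    rw [my_indep_integral_mul hInd (hYint i) (hYint k), hEYc i, zero_mul]
  have hYZ : ∀ i k l, k ≠ l → i ≠ k → i ≠ l →
      ∫ ω, (Zf i i ω - mY) * (Zf k l ω - mZ) ∂μ = 0 := by
    intro i k l hkl hik hil
    have hInd : ProbabilityTheory.IndepFun (fun ω => Zf i i ω - mY)
        (fun ω => Zf k l ω - mZ) μ :=
      ((hindep.indepFun_prodMk hmeas k l i hik.symm hil.symm).symm).comp
        (hφ.sub measurable_const) (hψ.sub measurable_const)
    rw [my_indep_integral_mul hInd (hYint i) (hZint k l), hEYc i, zero_mul]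
  have hZY : ∀ i j k, i ≠ j → k ≠ i → k ≠ j →
      ∫ ω, (Zf i j ω - mZ) * (Zf k k ω - mY) ∂μ = 0 := by
    intro i j k hij hki hkj
    have hInd : ProbabilityTheory.IndepFun (fun ω => Zf i j ω - mZ)
        (fun ω => Zf k k ω - mY) μ :=
      (hindep.indepFun_prodMk hmeas i j k hki.symm hkj.symm).comp
        (hψ.sub measurable_const) (hφ.sub measurable_const)
    rw [my_indep_integral_mul hInd (hZint i j) (hYint k), hEZc i j hij, zero_mul]
  have hZZ : ∀ i j k l, i ≠ j → k ≠ l → i ≠ k → i ≠ l → j ≠ k → j ≠ l →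
      ∫ ω, (Zf i j ω - mZ) * (Zf k l ω - mZ) ∂μ = 0 := by
    intro i j k l hij hkl hik hil hjk hjl
    have hInd : ProbabilityTheory.IndepFun (fun ω => Zf i j ω - mZ)
        (fun ω => Zf k l ω - mZ) μ :=
      (hindep.indepFun_prodMk_prodMk hmeas i j k l hik hil hjk hjl).comp
        (hψ.sub measurable_const) (hψ.sub measurable_const)
    rw [my_indep_integral_mul hInd (hZint i j) (hZint k l), hEZc i j hij, zero_mul]
  exact my_core μ n hn Zf A B mY mZ vY vZ hA0 hB0 hvZ0 hvYA hvZB hmem hEY hEZ hVY hVZ hYY hYZ hZY hZZ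

/-- Variance bound for the independence test statistic
`T = (1/(n(n-1))) ∑_{i≠j} (φ(X_i¹,X_i²) - φ(X_i¹,X_j²))` built from an i.i.d. sample of
pairs. -/
theorem stmt_16 {Ω 𝒳 : Type*} [MeasurableSpace Ω] [MeasurableSpace 𝒳]
    (μ : Measure Ω) [IsProbabilityMeasure μ]
    (n : ℕ) (hn : 4 ≤ n)
    (X : Fin n → Ω → 𝒳 × 𝒳)
    (hmeas : ∀ i, Measurable (X i))
    (hindep : ProbabilityTheory.iIndepFun X μ)
    (P : Measure (𝒳 × 𝒳))
    (hident : ∀ i, Measure.map (X i) μ = P)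
    (φ : 𝒳 × 𝒳 → ℝ) (hφ : Measurable φ)
    (hP2 : MeasureTheory.MemLp (fun ω => φ ((X ⟨0, by omega⟩ ω).1, (X ⟨0, by omega⟩ ω).2)) 2 μ)
    (hI2 : MeasureTheory.MemLp (fun ω => φ ((X ⟨0, by omega⟩ ω).1, (X ⟨1, by omega⟩ ω).2)) 2 μ) :
    ProbabilityTheory.variance (fun ω => (1 / ((n : ℝ) * ((n : ℝ) - 1))) *
        ∑ i, ∑ j, if i = j then 0 else
          (φ ((X i ω).1, (X i ω).2) - φ ((X i ω).1, (X j ω).2))) μ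
      ≤ (1 / n) *
        (Real.sqrt (∫ ω, (φ ((X ⟨0, by omega⟩ ω).1, (X ⟨0, by omega⟩ ω).2))^2 ∂μ)
          + 2 * Real.sqrt (∫ ω, (φ ((X ⟨0, by omega⟩ ω).1, (X ⟨1, by omega⟩ ω).2))^2 ∂μ))^2 := by
  have hi01 : (⟨0, by omega⟩ : Fin n) ≠ ⟨1, by omega⟩ := by
    intro h
    have := congrArg Fin.val h
    simp at this
  exact stmt_16_aux μ n hn X hmeas hindep P hident φ hφ ⟨0, by omega⟩ ⟨1, by omega⟩ hi01 hP2 hI2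
end
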